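/- arXiv:2604.07241 — 10 statements merged into one kernel-verified Lean document; each statement's English description precedes it below -/
import Mathlib

section
/- Let A : H → Set H be a maximal monotone set-valued operator with A(u) ≠ ∅ for every u ∈ H, and let B : H → H be a monotone and continuous single-valued operator. Then the set-valued operator (A + B)(u) = {a + B(u) : a ∈ A(u)} is maximal monotone. -/
open RealInnerProductSpace Set

/-! Monotonicity of `A + B` is the sum of the two monotonicity inequalities. For maximality
(Minty's trick), let `(u, v)` be monotonically related to `A + B`, and let `z ∈ A w`. At the
points `w_t = u + t (w - u)`, `0 < t < 1`, pick `z_t ∈ A w_t`; the relation tested at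
`(w_t, z_t + B w_t)` and monotonicity of `A` tested at `(w_t, z_t)`, `(w, z)` give, after
dividing by `t` and `1 - t`, `0 ≤ ⟪u - w, v - B w_t - z⟫`. Letting `t → 0` and using
continuity of `B` yields `0 ≤ ⟪u - w, (v - B u) - z⟫`, so `v - B u ∈ A u` by maximality of `A`. -/

section

variable {H : Type*} [NormedAddCommGroup H] [InnerProductSpace ℝ H]
  {A : H → Set H} {B : H → H}

theorem inner_add_sub_add_nonneg
    (hAmono : ∀ u v : H, ∀ a ∈ A u, ∀ b ∈ A v, 0 ≤ ⟪a - b, u - v⟫)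
    (hBmono : ∀ u v : H, 0 ≤ ⟪B u - B v, u - v⟫)
    {u v a b : H} (ha : a ∈ A u) (hb : b ∈ A v) :
    0 ≤ ⟪(a + B u) - (b + B v), u - v⟫ := by
  rw [add_sub_add_comm, inner_add_left]
  exact add_nonneg (hAmono u v a ha b hb) (hBmono u v)

theorem inner_sub_apply_segment_sub_nonneg
    (hAdom : ∀ u : H, (A u).Nonempty)
    (hAmono : ∀ u v : H, ∀ a ∈ A u, ∀ b ∈ A v, 0 ≤ ⟪a - b, u - v⟫)
    {u v : H} (hrel : ∀ w : H, ∀ z ∈ A w, 0 ≤ ⟪u - w, v - (z + B w)⟫)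
    {w z : H} (hz : z ∈ A w) {t : ℝ} (ht : t ∈ Ioo 0 1) :
    0 ≤ ⟪u - w, v - B (u + t • (w - u)) - z⟫ := by
  set wt := u + t • (w - u)
  obtain ⟨zt, hzt⟩ := hAdom wt
  have hrel_t : 0 ≤ ⟪u - w, v - (zt + B wt)⟫ := by
    have h := hrel wt zt hzt
    rwa [show u - wt = t • (u - w) by module, real_inner_smul_left,
      mul_nonneg_iff_of_pos_left ht.1] at h
  have hmono_t : 0 ≤ ⟪u - w, zt - z⟫ := by
    have h := hAmono wt w zt hzt z hz
    rwa [show wt - w = (1 - t) • (u - w) by module, real_inner_smul_right,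
      mul_nonneg_iff_of_pos_left (sub_pos.2 ht.2), real_inner_comm] at h
  calc (0 : ℝ) ≤ ⟪u - w, v - (zt + B wt)⟫ + ⟪u - w, zt - z⟫ := add_nonneg hrel_t hmono_t
    _ = ⟪u - w, v - B wt - z⟫ := by rw [← inner_add_right]; congr 1; abel

theorem inner_sub_apply_self_sub_nonneg
    (hAdom : ∀ u : H, (A u).Nonempty)
    (hAmono : ∀ u v : H, ∀ a ∈ A u, ∀ b ∈ A v, 0 ≤ ⟪a - b, u - v⟫)
    (hBcont : Continuous B)
    {u v : H} (hrel : ∀ w : H, ∀ z ∈ A w, 0 ≤ ⟪u - w, v - (z + B w)⟫)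
    {w z : H} (hz : z ∈ A w) :
    0 ≤ ⟪u - w, v - B u - z⟫ := by
  let g : ℝ → ℝ := fun t => ⟪u - w, v - B (u + t • (w - u)) - z⟫
  have hg : Continuous g := by fun_prop
  have h0 : (0 : ℝ) ∈ closure (Ioo 0 1) := by
    rw [closure_Ioo zero_ne_one]
    exact left_mem_Icc.2 zero_le_one
  have := continuousWithinAt_const.closure_le h0 hg.continuousWithinAt
    fun t ht => inner_sub_apply_segment_sub_nonneg hAdom hAmono hrel hz ht
  simpa [g] using this

end

theorem sum_maximal_monotone_general
    {H : Type*} [NormedAddCommGroup H] [InnerProductSpace ℝ H]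
    (A : H → Set H) (B : H → H)
    (hAdom : ∀ u : H, (A u).Nonempty)
    (hAmono : ∀ u v : H, ∀ a ∈ A u, ∀ b ∈ A v, 0 ≤ ⟪a - b, u - v⟫)
    (hAmax : ∀ u v : H, (∀ w : H, ∀ z ∈ A w, 0 ≤ ⟪u - w, v - z⟫) → v ∈ A u)
    (hBmono : ∀ u v : H, 0 ≤ ⟪B u - B v, u - v⟫)
    (hBcont : Continuous B)
    (S : H → Set H) (hS : ∀ x : H, S x = {y : H | ∃ a ∈ A x, y = a + B x}) :
    (∀ u v : H, ∀ a ∈ S u, ∀ b ∈ S v, 0 ≤ ⟪a - b, u - v⟫) ∧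
    (∀ u v : H, (∀ w : H, ∀ z ∈ S w, 0 ≤ ⟪u - w, v - z⟫) → v ∈ S u) := by
  obtain rfl : S = fun x => {y : H | ∃ a ∈ A x, y = a + B x} := funext hS
  refine ⟨?_, fun u v hrel => ⟨v - B u, hAmax u _ fun w z hz => ?_, (sub_add_cancel v _).symm⟩⟩
  · rintro u v _ ⟨a, ha, rfl⟩ _ ⟨b, hb, rfl⟩
    exact inner_add_sub_add_nonneg hAmono hBmono ha hb
  · exact inner_sub_apply_self_sub_nonneg hAdom hAmono hBcont
      (fun w z hz => hrel w _ ⟨z, hz, rfl⟩) hz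

/-- If `A` is a maximal monotone set-valued operator with full domain and
`B` is a monotone continuous single-valued operator, then the set-valued operator
`(A + B)(u) = {a + B u : a ∈ A u}` is maximal monotone (i.e. it is monotone and satisfies
the maximality property). -/
theorem sum_maximal_monotone
    {H : Type*} [NormedAddCommGroup H] [InnerProductSpace ℝ H] [CompleteSpace H]
    (A : H → Set H) (B : H → H)
    (hAdom : ∀ u : H, (A u).Nonempty)
    (hAmono : ∀ u v : H, ∀ a ∈ A u, ∀ b ∈ A v, 0 ≤ ⟪a - b, u - v⟫)
    (hAmax : ∀ u v : H, (∀ w : H, ∀ z ∈ A w, 0 ≤ ⟪u - w, v - z⟫) → v ∈ A u)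
    (hBmono : ∀ u v : H, 0 ≤ ⟪B u - B v, u - v⟫)
    (hBcont : Continuous B)
    (S : H → Set H) (hS : ∀ x : H, S x = {y : H | ∃ a ∈ A x, y = a + B x}) :
    (∀ u v : H, ∀ a ∈ S u, ∀ b ∈ S v, 0 ≤ ⟪a - b, u - v⟫) ∧
    (∀ u v : H, (∀ w : H, ∀ z ∈ S w, 0 ≤ ⟪u - w, v - z⟫) → v ∈ S u) :=
  sum_maximal_monotone_general A B hAdom hAmono hAmax hBmono hBcont S hS
end

section
/- Let A : H → Set H be maximal monotone such that I + λA is surjective for every λ > 0, and for λ > 0 and x ∈ H let J_{λA}(x) denote the unique point v ∈ H with x ∈ v + λA(v). Let B : H → H be monotone and continuous, and fix s > 0, μ ∈ (0,1), σ ∈ (0,1). Then for every w ∈ H there exists a nonnegative integer j such that, with λ = sμ^j and v = J_{λA}(w − λB(w)), the line-search condition λ‖B(w) − B(v)‖ ≤ σ‖w − v‖ holds. -/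
open RealInnerProductSpace Filter Topology

/-! With `v_λ = J_{λA}(w - λ B w)` and the residual `e_λ = w - v_λ`, monotonicity of `A` gives, for
`λ' ≤ λ`, that `‖e_λ'‖ ≤ ‖e_λ‖`, `λ' ‖e_λ‖ ≤ λ ‖e_λ'‖` and `‖e_λ - e_λ'‖² ≤ ‖e_λ‖² - ‖e_λ'‖²`.
Along `λ_j = s μ^j` the residuals therefore form a Cauchy sequence, with some limit `L`, and `B v_j`
converges by continuity. If `L ≠ 0`, then `λ_j ‖B w - B v_j‖ → 0` while `σ ‖e_j‖ → σ ‖L‖ > 0`.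
If `L = 0`, then `‖B w - B v_j‖ → 0` while `‖e_j‖ / λ_j ≥ ‖e_0‖ / λ_0`, which is positive unless
`v_0 = w` already passes the test. -/

theorem cauchySeq_of_norm_sub_sq_le {E : Type*} [SeminormedAddCommGroup E] {e : ℕ → E}
    (h : ∀ j k, j ≤ k → ‖e j - e k‖ ^ 2 ≤ ‖e j‖ ^ 2 - ‖e k‖ ^ 2) : CauchySeq e := by
  have hanti : Antitone fun j => ‖e j‖ ^ 2 := fun j k hjk => by
    linarith [h j k hjk, sq_nonneg ‖e j - e k‖]
  have hsq : CauchySeq fun j => ‖e j‖ ^ 2 :=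
    (tendsto_atTop_ciInf hanti ⟨0, by rintro _ ⟨j, rfl⟩; positivity⟩).cauchySeq
  rw [Metric.cauchySeq_iff'] at hsq ⊢
  intro ε hε
  obtain ⟨N, hN⟩ := hsq (ε ^ 2) (by positivity)
  refine ⟨N, fun n hn => ?_⟩
  have hdist : dist (e n) (e N) ^ 2 < ε ^ 2 := by
    rw [dist_comm, dist_eq_norm]
    have := hN n hn
    rw [Real.dist_eq, abs_sub_comm, abs_lt] at this
    linarith [h N n hn]
  exact lt_of_pow_lt_pow_left₀ 2 hε.le hdist

section

variable {H : Type*} [NormedAddCommGroup H] [InnerProductSpace ℝ H]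

/-- If `v = J_{lA}(w - l b)` and `v' = J_{l'A}(w - l' b)`, then `l l' (a - a') = l' e - l e'` for
the residuals `e = w - v`, `e' = w - v'`: the direction `b` cancels, and monotonicity of `A`
becomes an inequality between the residuals alone. -/
theorem inner_resolvent_residual_nonneg {A : H → Set H}
    (hA : ∀ u v : H, ∀ a ∈ A u, ∀ b ∈ A v, 0 ≤ ⟪a - b, u - v⟫)
    {l l' : ℝ} {w b v v' a a' : H} (ha : a ∈ A v) (ha' : a' ∈ A v')
    (hv : w - l • b = v + l • a) (hv' : w - l' • b = v' + l' • a') (hl : 0 ≤ l) (hl' : 0 ≤ l') :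
    0 ≤ ⟪l' • (w - v) - l • (w - v'), (w - v') - (w - v)⟫ := by
  have hsmul : l' • (w - v) - l • (w - v') = (l * l') • (a - a') := by
    linear_combination (norm := module) l' • hv - l • hv'
  rw [hsmul, sub_sub_sub_cancel_left, real_inner_smul_left]
  exact mul_nonneg (mul_nonneg hl hl') (hA v v' a ha a' ha')

namespace ResolventResidual

variable {l l' : ℝ} {e e' : H}

theorem weighted_norm_sq_le_inner (h : 0 ≤ ⟪l' • e - l • e', e' - e⟫) :
    l * ‖e'‖ ^ 2 + l' * ‖e‖ ^ 2 ≤ (l + l') * ⟪e, e'⟫ := by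
  simp only [inner_sub_left, inner_sub_right, real_inner_smul_left, real_inner_self_eq_norm_sq,
    real_inner_comm e e'] at h
  linarith

theorem mul_norm_sub_mul_norm_sub_nonpos (h : 0 ≤ ⟪l' • e - l • e', e' - e⟫) (hl : 0 ≤ l)
    (hl' : 0 ≤ l') :
    (l * ‖e'‖ - l' * ‖e‖) * (‖e'‖ - ‖e‖) ≤ 0 := by
  have hCS : (l + l') * ⟪e, e'⟫ ≤ (l + l') * (‖e‖ * ‖e'‖) :=
    mul_le_mul_of_nonneg_left (real_inner_le_norm e e') (add_nonneg hl hl')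
  nlinarith [weighted_norm_sq_le_inner h]

theorem norm_le (h : 0 ≤ ⟪l' • e - l • e', e' - e⟫) (hl' : 0 < l') (hll' : l' ≤ l) :
    ‖e'‖ ≤ ‖e‖ := by
  by_contra! hlt
  have hl : 0 < l := hl'.trans_le hll'
  have : l' * ‖e‖ < l * ‖e'‖ := by nlinarith [norm_nonneg e]
  nlinarith [mul_norm_sub_mul_norm_sub_nonpos h hl.le hl'.le]

theorem mul_norm_le (h : 0 ≤ ⟪l' • e - l • e', e' - e⟫) (hl' : 0 < l') (hll' : l' ≤ l) :
    l' * ‖e‖ ≤ l * ‖e'‖ := by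
  by_contra! hlt
  have hl : 0 < l := hl'.trans_le hll'
  have : ‖e'‖ < ‖e‖ := by nlinarith [norm_nonneg e]
  nlinarith [mul_norm_sub_mul_norm_sub_nonpos h hl.le hl'.le]

theorem norm_sub_sq_le (h : 0 ≤ ⟪l' • e - l • e', e' - e⟫) (hl' : 0 < l') (hll' : l' ≤ l) :
    ‖e - e'‖ ^ 2 ≤ ‖e‖ ^ 2 - ‖e'‖ ^ 2 := by
  have hsq : ‖e'‖ ^ 2 ≤ ‖e‖ ^ 2 := pow_le_pow_left₀ (norm_nonneg _) (norm_le h hl' hll') 2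
  have hinner : ‖e'‖ ^ 2 ≤ ⟪e, e'⟫ := by
    refine le_of_mul_le_mul_left ?_ (add_pos (hl'.trans_le hll') hl')
    nlinarith [weighted_norm_sq_le_inner h]
  rw [norm_sub_sq_real]
  linarith

end ResolventResidual

theorem exists_linesearch_step [CompleteSpace H] {A : H → Set H} {B : H → H}
    (hA : ∀ u v : H, ∀ a ∈ A u, ∀ b ∈ A v, 0 ≤ ⟪a - b, u - v⟫) (hB : Continuous B)
    {lam : ℕ → ℝ} (hpos : ∀ j, 0 < lam j) (hanti : Antitone lam)
    (hlim : Tendsto lam atTop (𝓝 0)) {σ : ℝ} (hσ : 0 < σ) {w : H} {v a : ℕ → H}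
    (ha : ∀ j, a j ∈ A (v j)) (hv : ∀ j, w - lam j • B w = v j + lam j • a j) :
    ∃ j, lam j * ‖B w - B (v j)‖ ≤ σ * ‖w - v j‖ := by
  have hcmp : ∀ j k, 0 ≤ ⟪lam k • (w - v j) - lam j • (w - v k), (w - v k) - (w - v j)⟫ :=
    fun j k => inner_resolvent_residual_nonneg hA (ha j) (ha k) (hv j) (hv k)
      (hpos j).le (hpos k).le
  obtain ⟨L, hL⟩ := cauchySeq_tendsto_of_complete <| cauchySeq_of_norm_sub_sq_le
    fun j k hjk => ResolventResidual.norm_sub_sq_le (hcmp j k) (hpos k) (hanti hjk)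
  have hBv : Tendsto (fun j => ‖B w - B (v j)‖) atTop (𝓝 ‖B w - B (w - L)‖) := by
    have hv_lim : Tendsto v atTop (𝓝 (w - L)) := by
      simpa using (tendsto_const_nhds (x := w)).sub hL
    exact (tendsto_const_nhds.sub ((hB.tendsto _).comp hv_lim)).norm
  rcases eq_or_ne L 0 with rfl | hL0
  · by_cases hw : v 0 = w
    · exact ⟨0, by simp [hw]⟩
    have he0 : 0 < ‖w - v 0‖ := norm_pos_iff.2 (sub_ne_zero.2 (Ne.symm hw))
    have hBv0 : Tendsto (fun j => lam 0 * ‖B w - B (v j)‖) atTop (𝓝 0) := by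
      simpa using hBv.const_mul (lam 0)
    obtain ⟨j, hj⟩ := (hBv0.eventually_lt_const (mul_pos hσ he0)).exists
    refine ⟨j, le_of_mul_le_mul_right ?_ he0⟩
    have hratio := ResolventResidual.mul_norm_le (hcmp 0 j) (hpos j) (hanti (Nat.zero_le j))
    calc lam j * ‖B w - B (v j)‖ * ‖w - v 0‖
        = (lam j * ‖w - v 0‖) * ‖B w - B (v j)‖ := by ring
      _ ≤ (lam 0 * ‖w - v j‖) * ‖B w - B (v j)‖ := by gcongr
      _ = (lam 0 * ‖B w - B (v j)‖) * ‖w - v j‖ := by ring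
      _ ≤ (σ * ‖w - v 0‖) * ‖w - v j‖ := by gcongr
      _ = σ * ‖w - v j‖ * ‖w - v 0‖ := by ring
  · have hstep : Tendsto (fun j => lam j * ‖B w - B (v j)‖) atTop (𝓝 0) := by
      simpa using hlim.mul hBv
    have hres : Tendsto (fun j => σ * ‖w - v j‖) atTop (𝓝 (σ * ‖L‖)) :=
      hL.norm.const_mul σ
    obtain ⟨j, hj⟩ := (hstep.eventually_lt hres (mul_pos hσ (norm_pos_iff.2 hL0))).exists
    exact ⟨j, hj.le⟩

end

theorem linesearch_terminates_general
    {H : Type*} [NormedAddCommGroup H] [InnerProductSpace ℝ H] [CompleteSpace H]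
    (A : H → Set H) (B : H → H)
    (hAmono : ∀ u v : H, ∀ a ∈ A u, ∀ b ∈ A v, 0 ≤ ⟪a - b, u - v⟫)
    (hsurj : ∀ lam : ℝ, 0 < lam → ∀ x : H, ∃ v : H, ∃ a ∈ A v, x = v + lam • a)
    (hBcont : Continuous B)
    (s μ σ : ℝ) (hs : 0 < s) (hμ : μ ∈ Set.Ioo (0 : ℝ) 1) (hσ : σ ∈ Set.Ioo (0 : ℝ) 1)
    (w : H) :
    ∃ j : ℕ, ∃ v : H, (∃ a ∈ A v, w - (s * μ ^ j) • B w = v + (s * μ ^ j) • a) ∧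
      (s * μ ^ j) * ‖B w - B v‖ ≤ σ * ‖w - v‖ := by
  obtain ⟨hμ0, hμ1⟩ := hμ
  have hpos : ∀ j : ℕ, 0 < s * μ ^ j := fun j => by positivity
  have hanti : Antitone fun j : ℕ => s * μ ^ j := fun j k hjk =>
    mul_le_mul_of_nonneg_left (pow_le_pow_of_le_one hμ0.le hμ1.le hjk) hs.le
  have hlim : Tendsto (fun j : ℕ => s * μ ^ j) atTop (𝓝 0) := by
    simpa using (tendsto_pow_atTop_nhds_zero_of_lt_one hμ0.le hμ1).const_mul s
  choose v a ha hv using fun j => hsurj _ (hpos j) (w - (s * μ ^ j) • B w)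
  obtain ⟨j, hj⟩ := exists_linesearch_step hAmono hBcont hpos hanti hlim hσ.1 ha hv
  exact ⟨j, v j, ⟨a j, ha j, hv j⟩, hj⟩

/-- For a maximal monotone operator `A` with `I + λA` surjective for every
`λ > 0` (so that the resolvent `J_{λA}` is well defined) and a monotone continuous `B`,
the Armijo-type line search terminates: for every `w` there is a nonnegative integer `j`
such that, with `λ = s μ^j` and `v = J_{λA}(w - λ B w)`, one has
`λ‖B w - B v‖ ≤ σ‖w - v‖`. -/
theorem linesearch_terminates
    {H : Type*} [NormedAddCommGroup H] [InnerProductSpace ℝ H] [CompleteSpace H]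
    (A : H → Set H) (B : H → H)
    (hAmono : ∀ u v : H, ∀ a ∈ A u, ∀ b ∈ A v, 0 ≤ ⟪a - b, u - v⟫)
    (hAmax : ∀ u v : H, (∀ w : H, ∀ z ∈ A w, 0 ≤ ⟪u - w, v - z⟫) → v ∈ A u)
    (hsurj : ∀ lam : ℝ, 0 < lam → ∀ x : H, ∃ v : H, ∃ a ∈ A v, x = v + lam • a)
    (hBmono : ∀ u v : H, 0 ≤ ⟪B u - B v, u - v⟫)
    (hBcont : Continuous B)
    (s μ σ : ℝ) (hs : 0 < s) (hμ : μ ∈ Set.Ioo (0 : ℝ) 1) (hσ : σ ∈ Set.Ioo (0 : ℝ) 1)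
    (w : H) :
    ∃ j : ℕ, ∃ v : H, (∃ a ∈ A v, w - (s * μ ^ j) • B w = v + (s * μ ^ j) • a) ∧
      (s * μ ^ j) * ‖B w - B v‖ ≤ σ * ‖w - v‖ :=
  linesearch_terminates_general A B hAmono hsurj hBcont s μ σ hs hμ hσ w
end

section
/- Let A : H → Set H be maximal monotone with A(u) ≠ ∅ for every u ∈ H, let B : H → H be monotone and continuous, and let σ ∈ (0,1) and 0 < λ_min ≤ s. Let (w_j), (v_j) be sequences in H and (λ_j) a sequence in [λ_min, s] such that for every j: w_j − λ_jB(w_j) ∈ v_j + λ_jA(v_j) and λ_j‖B(w_j) − B(v_j)‖ ≤ σ‖w_j − v_j‖. If ‖w_j − v_j‖ → 0 and (w_j) converges weakly to some w* ∈ H, then w* ∈ Ω, i.e. −B(w*) ∈ A(w*). -/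
/-! The forward–backward inclusion puts `c_j := a_j + B v_j` in `(A + B) v_j`, and the
line-search condition together with `λ_j ≥ λ_min` gives `‖c_j‖ ≤ (1 + σ) / λ_min ‖w_j - v_j‖`,
so `c_j → 0` strongly, while `v_j ⇀ w*` weakly. Since the graph of a monotone operator is
closed under weak-strong limits in Minty's sense, `⟪w* - u, 0 - z⟫ ≥ 0` for all `z ∈ (A + B) u`.
Finally `A + B` is maximal monotone: `A` is maximal with full domain and `B` is continuous, so
Minty's trick along segments applies. Hence `0 ∈ (A + B) w*`. -/

open RealInnerProductSpace Filter Topology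

theorem mul_norm_add_le_of_forward_backward_step {E : Type*} [SeminormedAddCommGroup E]
    [NormedSpace ℝ E] {a w v Bw Bv : E} {lam σ : ℝ} (hlam : 0 ≤ lam)
    (hstep : w - lam • Bw = v + lam • a) (hls : lam * ‖Bw - Bv‖ ≤ σ * ‖w - v‖) :
    lam * ‖a + Bv‖ ≤ (1 + σ) * ‖w - v‖ := by
  have hres : lam • (a + Bv) = (w - v) - lam • (Bw - Bv) := by
    have ha : lam • a = w - lam • Bw - v := by rw [hstep]; abel
    rw [smul_add, ha, smul_sub]
    abel
  calc lam * ‖a + Bv‖ = ‖lam • (a + Bv)‖ := by rw [norm_smul, Real.norm_of_nonneg hlam]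
    _ ≤ ‖w - v‖ + lam * ‖Bw - Bv‖ := by
      rw [hres]
      refine (norm_sub_le _ _).trans_eq ?_
      rw [norm_smul, Real.norm_of_nonneg hlam]
    _ ≤ (1 + σ) * ‖w - v‖ := by linarith

theorem tendsto_zero_of_mul_norm_le {E : Type*} [SeminormedAddCommGroup E] {c : ℕ → E}
    {lam r : ℕ → ℝ} {lamMin K : ℝ} (hlamMin : 0 < lamMin) (hlam : ∀ j, lamMin ≤ lam j)
    (hc : ∀ j, lam j * ‖c j‖ ≤ K * r j) (hr : Tendsto r atTop (𝓝 0)) :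
    Tendsto c atTop (𝓝 0) := by
  refine squeeze_zero_norm (fun j => ?_) (by simpa using hr.const_mul (K / lamMin))
  rw [div_mul_eq_mul_div, le_div_iff₀ hlamMin, mul_comm]
  exact (mul_le_mul_of_nonneg_right (hlam j) (norm_nonneg _)).trans (hc j)

section MonotoneOperators

variable {H : Type*} [SeminormedAddCommGroup H] [InnerProductSpace ℝ H]

def IsMonotoneOperator (T : H → Set H) : Prop :=
  ∀ u v : H, ∀ a ∈ T u, ∀ b ∈ T v, 0 ≤ ⟪a - b, u - v⟫

def IsMaximalMonotone (T : H → Set H) : Prop :=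
  IsMonotoneOperator T ∧ ∀ u v : H, (∀ w : H, ∀ z ∈ T w, 0 ≤ ⟪u - w, v - z⟫) → v ∈ T u

def addOperator (A : H → Set H) (B : H → H) : H → Set H :=
  fun u => {z | z - B u ∈ A u}

def WeakTendsto (x : ℕ → H) (x₀ : H) : Prop :=
  ∀ y : H, Tendsto (fun j => ⟪x j, y⟫) atTop (𝓝 ⟪x₀, y⟫)

theorem IsMonotoneOperator.add {A : H → Set H} {B : H → H} (hA : IsMonotoneOperator A)
    (hB : ∀ u v : H, 0 ≤ ⟪B u - B v, u - v⟫) : IsMonotoneOperator (addOperator A B) := by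
  intro u v a ha b hb
  have hsplit : a - b = (a - B u - (b - B v)) + (B u - B v) := by abel
  rw [hsplit, inner_add_left]
  exact add_nonneg (hA u v _ ha _ hb) (hB u v)

theorem IsMaximalMonotone.add {A : H → Set H} {B : H → H} (hA : IsMaximalMonotone A)
    (hAdom : ∀ u : H, (A u).Nonempty) (hB : ∀ u v : H, 0 ≤ ⟪B u - B v, u - v⟫)
    (hBcont : Continuous B) : IsMaximalMonotone (addOperator A B) := by
  refine ⟨hA.1.add hB, fun x y h => hA.2 x (y - B x) fun u z hz => ?_⟩
  set d := x - u
  -- Minty's trick: test the hypothesis along the segment from `x` towards `u`.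
  have hsegment : ∀ t ∈ Set.Ioo (0 : ℝ) 1, ⟪d, z⟫ ≤ ⟪d, y - B (x - t • d)⟫ := by
    rintro t ⟨ht₀, ht₁⟩
    set p := x - t • d
    obtain ⟨zp, hzp⟩ := hAdom p
    have hxp : 0 ≤ t * ⟪d, y - (zp + B p)⟫ := by
      have := h p (zp + B p) (by simpa [addOperator] using hzp)
      rwa [show x - p = t • d by simp [p], real_inner_smul_left] at this
    have hpu : 0 ≤ (1 - t) * ⟪zp - z, d⟫ := by
      have := hA.1 p u zp hzp z hz
      rwa [show p - u = (1 - t) • d by simp only [p, d, sub_smul, one_smul]; abel,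
        real_inner_smul_right] at this
    replace hxp := (mul_nonneg_iff_of_pos_left ht₀).1 hxp
    replace hpu := (mul_nonneg_iff_of_pos_left (sub_pos.2 ht₁)).1 hpu
    rw [inner_sub_right, inner_add_right] at hxp
    rw [inner_sub_left, real_inner_comm d zp, real_inner_comm d z] at hpu
    rw [inner_sub_right]
    linarith
  have hlim : Tendsto (fun t : ℝ => ⟪d, y - B (x - t • d)⟫) (𝓝[>] 0) (𝓝 ⟪d, y - B x⟫) := by
    have hcont : Continuous fun t : ℝ => ⟪d, y - B (x - t • d)⟫ := by fun_prop
    simpa using (hcont.tendsto 0).mono_left nhdsWithin_le_nhds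
  have hle : ⟪d, z⟫ ≤ ⟪d, y - B x⟫ :=
    ge_of_tendsto hlim (Filter.mem_of_superset (Ioo_mem_nhdsGT one_pos) hsegment)
  rw [inner_sub_right]
  linarith

theorem WeakTendsto.sub_const {x : ℕ → H} {x₀ : H} (hx : WeakTendsto x x₀) (u : H) :
    WeakTendsto (fun j => x j - u) (x₀ - u) := by
  intro y
  simp only [inner_sub_left]
  exact (hx y).sub_const _

theorem WeakTendsto.of_tendsto_norm_sub {x x' : ℕ → H} {x₀ : H} (hx : WeakTendsto x x₀)
    (hxx' : Tendsto (fun j => ‖x j - x' j‖) atTop (𝓝 0)) : WeakTendsto x' x₀ := by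
  intro y
  have hdiff : Tendsto (fun j => ⟪x j - x' j, y⟫) atTop (𝓝 0) := by
    simpa [Function.comp_def] using ((continuous_id.inner continuous_const).tendsto 0).comp
      (tendsto_zero_iff_norm_tendsto_zero.2 hxx')
  simpa [inner_sub_left] using (hx y).sub hdiff

theorem WeakTendsto.exists_norm_le [CompleteSpace H] {x : ℕ → H} {x₀ : H}
    (hx : WeakTendsto x x₀) : ∃ C, ∀ j, ‖x j‖ ≤ C := by
  have hpointwise : ∀ y : H, ∃ M, ∀ j, ‖innerSL ℝ (x j) y‖ ≤ M := fun y => by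
    obtain ⟨M, hM⟩ := (hx y).norm.bddAbove_range
    exact ⟨M, fun j => hM ⟨j, rfl⟩⟩
  obtain ⟨C, hC⟩ := banach_steinhaus hpointwise
  exact ⟨C, fun j => by simpa only [innerSL_apply_norm] using hC j⟩

theorem WeakTendsto.tendsto_inner [CompleteSpace H] {x y : ℕ → H} {x₀ y₀ : H}
    (hx : WeakTendsto x x₀) (hy : Tendsto y atTop (𝓝 y₀)) :
    Tendsto (fun j => ⟪x j, y j⟫) atTop (𝓝 ⟪x₀, y₀⟫) := by
  obtain ⟨C, hC⟩ := hx.exists_norm_le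
  have hsmall : Tendsto (fun j => ⟪x j, y j - y₀⟫) atTop (𝓝 0) := by
    refine squeeze_zero_norm (fun j => ?_)
      (by simpa using (tendsto_iff_norm_sub_tendsto_zero.1 hy).const_mul C)
    exact (norm_inner_le_norm _ _).trans (by gcongr; exact hC j)
  simpa [inner_sub_right] using (hx y₀).add hsmall

/-- Weak-strong closedness of the graph of a monotone operator, in Minty's form. -/
theorem IsMonotoneOperator.inner_nonneg_of_tendsto [CompleteSpace H] {T : H → Set H}
    (hT : IsMonotoneOperator T) {x y : ℕ → H} {x₀ y₀ : H} (hx : WeakTendsto x x₀)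
    (hy : Tendsto y atTop (𝓝 y₀)) (hxy : ∀ j, y j ∈ T (x j)) :
    ∀ u : H, ∀ z ∈ T u, 0 ≤ ⟪x₀ - u, y₀ - z⟫ := fun u z hz =>
  ge_of_tendsto' ((hx.sub_const u).tendsto_inner (hy.sub_const z)) fun j => by
    rw [real_inner_comm]
    exact hT _ _ _ (hxy j) _ hz

end MonotoneOperators

theorem weak_cluster_point_is_solution_general
    {H : Type*} [NormedAddCommGroup H] [InnerProductSpace ℝ H] [CompleteSpace H]
    (A : H → Set H) (B : H → H)
    (hAdom : ∀ u : H, (A u).Nonempty)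
    (hAmono : ∀ u v : H, ∀ a ∈ A u, ∀ b ∈ A v, 0 ≤ ⟪a - b, u - v⟫)
    (hAmax : ∀ u v : H, (∀ w : H, ∀ z ∈ A w, 0 ≤ ⟪u - w, v - z⟫) → v ∈ A u)
    (hBmono : ∀ u v : H, 0 ≤ ⟪B u - B v, u - v⟫)
    (hBcont : Continuous B)
    (σ lamMin s : ℝ) (hlamMin : 0 < lamMin)
    (w v : ℕ → H) (lam : ℕ → ℝ)
    (hlam : ∀ j : ℕ, lam j ∈ Set.Icc lamMin s)
    (hfb : ∀ j : ℕ, ∃ a ∈ A (v j), w j - lam j • B (w j) = v j + lam j • a)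
    (hls : ∀ j : ℕ, lam j * ‖B (w j) - B (v j)‖ ≤ σ * ‖w j - v j‖)
    (hdiff : Tendsto (fun j : ℕ => ‖w j - v j‖) atTop (𝓝 0))
    (wstar : H)
    (hweak : ∀ y : H, Tendsto (fun j : ℕ => ⟪w j, y⟫) atTop (𝓝 ⟪wstar, y⟫)) :
    -B wstar ∈ A wstar := by
  choose a ha hstep using hfb
  have hres : Tendsto (fun j => a j + B (v j)) atTop (𝓝 0) :=
    tendsto_zero_of_mul_norm_le hlamMin (fun j => (hlam j).1)
      (fun j => mul_norm_add_le_of_forward_backward_step (hlamMin.trans_le (hlam j).1).le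
        (hstep j) (hls j)) hdiff
  have hAB : IsMaximalMonotone (addOperator A B) :=
    IsMaximalMonotone.add ⟨hAmono, hAmax⟩ hAdom hBmono hBcont
  have hminty := hAB.1.inner_nonneg_of_tendsto (WeakTendsto.of_tendsto_norm_sub hweak hdiff)
    hres fun j => by simpa [addOperator] using ha j
  simpa [addOperator] using hAB.2 wstar 0 hminty

/-- If `(w_j)`, `(v_j)` satisfy the forward–backward inclusion and the
line-search condition with steps `λ_j ∈ [λ_min, s]`, `‖w_j - v_j‖ → 0`, and `(w_j)`
converges weakly to `w*`, then `w*` solves the inclusion: `-B w* ∈ A w*`. -/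
theorem weak_cluster_point_is_solution
    {H : Type*} [NormedAddCommGroup H] [InnerProductSpace ℝ H] [CompleteSpace H]
    (A : H → Set H) (B : H → H)
    (hAdom : ∀ u : H, (A u).Nonempty)
    (hAmono : ∀ u v : H, ∀ a ∈ A u, ∀ b ∈ A v, 0 ≤ ⟪a - b, u - v⟫)
    (hAmax : ∀ u v : H, (∀ w : H, ∀ z ∈ A w, 0 ≤ ⟪u - w, v - z⟫) → v ∈ A u)
    (hBmono : ∀ u v : H, 0 ≤ ⟪B u - B v, u - v⟫)
    (hBcont : Continuous B)
    (σ lamMin s : ℝ) (hσ : σ ∈ Set.Ioo (0 : ℝ) 1) (hlamMin : 0 < lamMin) (hles : lamMin ≤ s)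
    (w v : ℕ → H) (lam : ℕ → ℝ)
    (hlam : ∀ j : ℕ, lam j ∈ Set.Icc lamMin s)
    (hfb : ∀ j : ℕ, ∃ a ∈ A (v j), w j - lam j • B (w j) = v j + lam j • a)
    (hls : ∀ j : ℕ, lam j * ‖B (w j) - B (v j)‖ ≤ σ * ‖w j - v j‖)
    (hdiff : Tendsto (fun j : ℕ => ‖w j - v j‖) atTop (𝓝 0))
    (wstar : H)
    (hweak : ∀ y : H, Tendsto (fun j : ℕ => ⟪w j, y⟫) atTop (𝓝 ⟪wstar, y⟫)) :
    -B wstar ∈ A wstar :=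
  weak_cluster_point_is_solution_general A B hAdom hAmono hAmax hBmono hBcont σ lamMin s hlamMin w v
    lam hlam hfb hls hdiff wstar hweak
end

section
/- Let σ ∈ (0,1), γ ∈ (0,2), λ > 0, let A : H → Set H and B : H → H be monotone, and let u* ∈ Ω. Suppose w, v ∈ H satisfy w − λB(w) ∈ v + λA(v) and λ‖B(w) − B(v)‖ ≤ σ‖w − v‖, set φ = (w − v) − λ(B(w) − B(v)), assume φ ≠ 0, and let δ = ⟨w − v, φ⟩/‖φ‖² and u⁺ = w − γδφ. Then ‖u⁺ − u*‖² ≤ ‖w − u*‖² − γ(2 − γ)·⟨w − v, φ⟩²/‖φ‖². -/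
/-!
`u⁺ = w - γ δ φ` is the γ-relaxed projection of `w` onto the half-space `{x | ⟪x - v, φ⟫ ≤ 0}`.
Since `φ = λ (a + B v)` with `a + B v ∈ (A + B) v`, while `0 ∈ (A + B) u*`, monotonicity of `A + B`
puts every solution `u*` in that half-space; the bound `λ‖B w - B v‖ ≤ σ‖w - v‖` with `σ < 1`
gives `⟪w - v, φ⟫ ≥ (1 - σ)‖w - v‖² ≥ 0`. The inequality is then the Fejér estimate for
relaxed projections onto a half-space.
-/

open RealInnerProductSpace

section

variable {H : Type*} [NormedAddCommGroup H] [InnerProductSpace ℝ H]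

theorem inner_add_sub_nonneg_of_neg_mem {A : H → Set H} {B : H → H}
    (hA : ∀ u v : H, ∀ a ∈ A u, ∀ b ∈ A v, 0 ≤ ⟪a - b, u - v⟫)
    (hB : ∀ u v : H, 0 ≤ ⟪B u - B v, u - v⟫) {u v a : H} (ha : a ∈ A v) (hu : -B u ∈ A u) :
    0 ≤ ⟪a + B v, v - u⟫ := by
  have hsplit : a + B v = (a - -B u) + (B v - B u) := by abel
  rw [hsplit, inner_add_left]
  exact add_nonneg (hA v u a ha _ hu) (hB v u)

theorem sub_mul_sq_le_inner_sub {σ : ℝ} {x z : H} (hz : ‖z‖ ≤ σ * ‖x‖) :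
    (1 - σ) * ‖x‖ ^ 2 ≤ ⟪x, x - z⟫ := by
  have hcs : ⟪x, z⟫ ≤ ‖x‖ * ‖z‖ := real_inner_le_norm x z
  rw [inner_sub_right, real_inner_self_eq_norm_sq]
  nlinarith [mul_le_mul_of_nonneg_left hz (norm_nonneg x)]

theorem norm_sub_relaxed_proj_sub_sq_le {γ : ℝ} (hγ : 0 ≤ γ) {w v u φ : H}
    (hw : 0 ≤ ⟪w - v, φ⟫) (hu : 0 ≤ ⟪v - u, φ⟫) :
    ‖w - (γ * (⟪w - v, φ⟫ / ‖φ‖ ^ 2)) • φ - u‖ ^ 2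
      ≤ ‖w - u‖ ^ 2 - γ * (2 - γ) * (⟪w - v, φ⟫ ^ 2 / ‖φ‖ ^ 2) := by
  rcases eq_or_ne φ 0 with rfl | hφ
  · simp
  have hφ2 : 0 < ‖φ‖ ^ 2 := by positivity
  set t := ⟪w - v, φ⟫
  have hsplit : ⟪w - u, φ⟫ = t + ⟪v - u, φ⟫ := by
    rw [← inner_add_left]; congr 1; abel
  have hexp : ‖w - (γ * (t / ‖φ‖ ^ 2)) • φ - u‖ ^ 2
      = ‖w - u‖ ^ 2 - γ * (2 - γ) * (t ^ 2 / ‖φ‖ ^ 2)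
        - 2 * (γ * (t / ‖φ‖ ^ 2)) * ⟪v - u, φ⟫ := by
    rw [sub_right_comm, norm_sub_sq_real, real_inner_smul_right, norm_smul, mul_pow,
      Real.norm_eq_abs, sq_abs, hsplit]
    field_simp
    ring
  rw [hexp, sub_le_self_iff]
  have : 0 ≤ γ * (t / ‖φ‖ ^ 2) := mul_nonneg hγ (div_nonneg hw hφ2.le)
  positivity

end

theorem contraction_step_inequality_general
    {H : Type*} [NormedAddCommGroup H] [InnerProductSpace ℝ H]
    (σ γ lam : ℝ) (hσ : σ ∈ Set.Ioo (0 : ℝ) 1) (hγ : γ ∈ Set.Ioo (0 : ℝ) 2) (hlam : 0 < lam)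
    (A : H → Set H) (B : H → H)
    (hAmono : ∀ u v : H, ∀ a ∈ A u, ∀ b ∈ A v, 0 ≤ ⟪a - b, u - v⟫)
    (hBmono : ∀ u v : H, 0 ≤ ⟪B u - B v, u - v⟫)
    (ustar : H) (hstar : -B ustar ∈ A ustar)
    (w v : H)
    (hfb : ∃ a ∈ A v, w - lam • B w = v + lam • a)
    (hls : lam * ‖B w - B v‖ ≤ σ * ‖w - v‖)
    (φ : H) (hφdef : φ = (w - v) - lam • (B w - B v))
    (δ : ℝ) (hδ : δ = ⟪w - v, φ⟫ / ‖φ‖ ^ 2)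
    (uplus : H) (huplus : uplus = w - (γ * δ) • φ) :
    ‖uplus - ustar‖ ^ 2 ≤ ‖w - ustar‖ ^ 2 - γ * (2 - γ) * (⟪w - v, φ⟫ ^ 2 / ‖φ‖ ^ 2) := by
  obtain ⟨a, ha, hres⟩ := hfb
  have hφa : φ = lam • (a + B v) := by
    rw [hφdef]; linear_combination (norm := module) hres
  have hustar : 0 ≤ ⟪v - ustar, φ⟫ := by
    rw [hφa, real_inner_smul_right, real_inner_comm]
    exact mul_nonneg hlam.le (inner_add_sub_nonneg_of_neg_mem hAmono hBmono ha hstar)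
  have hw : 0 ≤ ⟪w - v, φ⟫ := by
    have hz : ‖lam • (B w - B v)‖ ≤ σ * ‖w - v‖ := by
      rwa [norm_smul, Real.norm_of_nonneg hlam.le]
    rw [hφdef]
    exact le_trans (by nlinarith [hσ.2, norm_nonneg (w - v)]) (sub_mul_sq_le_inner_sub hz)
  rw [huplus, hδ]
  exact norm_sub_relaxed_proj_sub_sq_le hγ.1.le hw hustar

/-- One-step contraction inequality:
`‖u⁺ - u*‖² ≤ ‖w - u*‖² - γ(2 - γ)·⟨w - v, φ⟩²/‖φ‖²`. -/
theorem contraction_step_inequality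
    {H : Type*} [NormedAddCommGroup H] [InnerProductSpace ℝ H] [CompleteSpace H]
    (σ γ lam : ℝ) (hσ : σ ∈ Set.Ioo (0 : ℝ) 1) (hγ : γ ∈ Set.Ioo (0 : ℝ) 2) (hlam : 0 < lam)
    (A : H → Set H) (B : H → H)
    (hAmono : ∀ u v : H, ∀ a ∈ A u, ∀ b ∈ A v, 0 ≤ ⟪a - b, u - v⟫)
    (hBmono : ∀ u v : H, 0 ≤ ⟪B u - B v, u - v⟫)
    (ustar : H) (hstar : -B ustar ∈ A ustar)
    (w v : H)
    (hfb : ∃ a ∈ A v, w - lam • B w = v + lam • a)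
    (hls : lam * ‖B w - B v‖ ≤ σ * ‖w - v‖)
    (φ : H) (hφdef : φ = (w - v) - lam • (B w - B v)) (hφ : φ ≠ 0)
    (δ : ℝ) (hδ : δ = ⟪w - v, φ⟫ / ‖φ‖ ^ 2)
    (uplus : H) (huplus : uplus = w - (γ * δ) • φ) :
    ‖uplus - ustar‖ ^ 2 ≤ ‖w - ustar‖ ^ 2 - γ * (2 - γ) * (⟪w - v, φ⟫ ^ 2 / ‖φ‖ ^ 2) :=
  contraction_step_inequality_general σ γ lam hσ hγ hlam A B hAmono hBmono ustar hstar w v hfb hls φ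
    hφdef δ hδ uplus huplus
end

section
/- Let σ ∈ (0,1), λ > 0, and let w, v ∈ H satisfy λ‖B(w) − B(v)‖ ≤ σ‖w − v‖ for a map B : H → H. Set φ = (w − v) − λ(B(w) − B(v)) and assume φ ≠ 0. Then the quantity δ = ⟨w − v, φ⟩/‖φ‖² satisfies (1 − σ)/(1 + σ)² ≤ δ ≤ 1/(1 − σ). -/
/-!
With `u = w - v` and `z = λ (B w - B v)` the line-search condition reads `‖z‖ ≤ σ ‖u‖` and
`φ = u - z`. The triangle and Cauchy–Schwarz inequalities give `(1 - σ) ‖u‖ ≤ ‖φ‖ ≤ (1 + σ) ‖u‖`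
and `(1 - σ) ‖u‖² ≤ ⟪u, φ⟫ ≤ ‖u‖ ‖φ‖`, which squeeze `δ = ⟪u, φ⟫ / ‖φ‖²`.
-/

open RealInnerProductSpace

section Seminormed

variable {E : Type*} [SeminormedAddCommGroup E] {σ : ℝ} {u z : E}

lemma norm_sub_le_one_add_mul (h : ‖z‖ ≤ σ * ‖u‖) : ‖u - z‖ ≤ (1 + σ) * ‖u‖ := by
  linarith [norm_sub_le u z]

lemma one_sub_mul_le_norm_sub (h : ‖z‖ ≤ σ * ‖u‖) : (1 - σ) * ‖u‖ ≤ ‖u - z‖ := by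
  linarith [norm_sub_norm_le u z]

end Seminormed

section InnerProduct

variable {H : Type*} [NormedAddCommGroup H] [InnerProductSpace ℝ H] {σ : ℝ} {u z : H}

lemma one_sub_mul_sq_le_inner_sub (h : ‖z‖ ≤ σ * ‖u‖) : (1 - σ) * ‖u‖ ^ 2 ≤ ⟪u, u - z⟫ := by
  rw [inner_sub_right, real_inner_self_eq_norm_sq]
  nlinarith [real_inner_le_norm u z, norm_nonneg u]

lemma one_sub_div_one_add_sq_le_inner_div_norm_sq (hσ : σ < 1) (h : ‖z‖ ≤ σ * ‖u‖)
    (hne : u - z ≠ 0) : (1 - σ) / (1 + σ) ^ 2 ≤ ⟪u, u - z⟫ / ‖u - z‖ ^ 2 := by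
  have hpos : 0 < ‖u - z‖ := norm_pos_iff.mpr hne
  have hupper := norm_sub_le_one_add_mul h
  have hσ' : 0 < 1 + σ := by
    by_contra! hσ'
    nlinarith [norm_nonneg u]
  rw [div_le_div_iff₀ (by positivity) (by positivity)]
  calc (1 - σ) * ‖u - z‖ ^ 2 ≤ (1 - σ) * ((1 + σ) * ‖u‖) ^ 2 := by gcongr
    _ = (1 - σ) * ‖u‖ ^ 2 * (1 + σ) ^ 2 := by ring
    _ ≤ ⟪u, u - z⟫ * (1 + σ) ^ 2 := by gcongr; exact one_sub_mul_sq_le_inner_sub h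

lemma inner_div_norm_sq_le_one_div_one_sub (hσ : σ < 1) (h : ‖z‖ ≤ σ * ‖u‖)
    (hne : u - z ≠ 0) : ⟪u, u - z⟫ / ‖u - z‖ ^ 2 ≤ 1 / (1 - σ) := by
  have hpos : 0 < ‖u - z‖ := norm_pos_iff.mpr hne
  rw [div_le_div_iff₀ (by positivity) (by linarith)]
  calc ⟪u, u - z⟫ * (1 - σ) ≤ ‖u‖ * ‖u - z‖ * (1 - σ) :=
        mul_le_mul_of_nonneg_right (real_inner_le_norm u (u - z)) (by linarith)
    _ = (1 - σ) * ‖u‖ * ‖u - z‖ := by ring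
    _ ≤ 1 * ‖u - z‖ ^ 2 := by nlinarith [one_sub_mul_le_norm_sub h]

end InnerProduct

theorem delta_bounds_general
    {H : Type*} [NormedAddCommGroup H] [InnerProductSpace ℝ H]
    (σ lam : ℝ) (hσ : σ ∈ Set.Ioo (0 : ℝ) 1) (hlam : 0 < lam)
    (B : H → H) (w v : H)
    (hls : lam * ‖B w - B v‖ ≤ σ * ‖w - v‖)
    (φ : H) (hφdef : φ = (w - v) - lam • (B w - B v)) (hφ : φ ≠ 0)
    (δ : ℝ) (hδ : δ = ⟪w - v, φ⟫ / ‖φ‖ ^ 2) :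
    (1 - σ) / (1 + σ) ^ 2 ≤ δ ∧ δ ≤ 1 / (1 - σ) := by
  have hstep : ‖lam • (B w - B v)‖ ≤ σ * ‖w - v‖ := by
    rwa [norm_smul, Real.norm_of_nonneg hlam.le]
  subst hφdef hδ
  exact ⟨one_sub_div_one_add_sq_le_inner_div_norm_sq hσ.2 hstep hφ,
    inner_div_norm_sq_le_one_div_one_sub hσ.2 hstep hφ⟩

/-- Under the line-search condition, the step coefficient
`δ = ⟨w - v, φ⟩/‖φ‖²` satisfies `(1 - σ)/(1 + σ)² ≤ δ ≤ 1/(1 - σ)`. -/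
theorem delta_bounds
    {H : Type*} [NormedAddCommGroup H] [InnerProductSpace ℝ H] [CompleteSpace H]
    (σ lam : ℝ) (hσ : σ ∈ Set.Ioo (0 : ℝ) 1) (hlam : 0 < lam)
    (B : H → H) (w v : H)
    (hls : lam * ‖B w - B v‖ ≤ σ * ‖w - v‖)
    (φ : H) (hφdef : φ = (w - v) - lam • (B w - B v)) (hφ : φ ≠ 0)
    (δ : ℝ) (hδ : δ = ⟪w - v, φ⟫ / ‖φ‖ ^ 2) :
    (1 - σ) / (1 + σ) ^ 2 ≤ δ ∧ δ ≤ 1 / (1 - σ) :=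
  delta_bounds_general σ lam hσ hlam B w v hls φ hφdef hφ δ hδ
end

section
/- Let σ ∈ (0,1), γ ∈ (0,2), λ > 0, let A : H → Set H and B : H → H be monotone, and let u* ∈ Ω. Suppose w, v ∈ H satisfy w − λB(w) ∈ v + λA(v) and λ‖B(w) − B(v)‖ ≤ σ‖w − v‖, set φ = (w − v) − λ(B(w) − B(v)), assume φ ≠ 0, and let δ = ⟨w − v, φ⟩/‖φ‖² and u⁺ = w − γδφ. Then ‖u⁺ − u*‖² ≤ ‖w − u*‖² − γ(2 − γ)·((1 − σ)/(1 + σ))²·‖w − v‖². -/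
/-!
Since `w - λ B w ∈ v + λ A v`, the direction `φ` equals `λ (a + B v)` with `a ∈ A v`, so the
monotonicity of `A + B`, whose zero set contains `u*`, gives `⟪v - u*, φ⟫ ≥ 0`: the hyperplane
through `w - δ φ` with normal `φ` separates `w` from `Ω`. A relaxed projection onto it with
factor `γ ∈ (0, 2)` decreases `‖· - u*‖²` by `γ (2 - γ) δ² ‖φ‖²`, and the Lipschitz-type condition
`λ ‖B w - B v‖ ≤ σ ‖w - v‖` bounds `δ ‖φ‖ = ⟪w - v, φ⟫ / ‖φ‖` below by `(1 - σ) / (1 + σ) ‖w - v‖`.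
-/

open RealInnerProductSpace

section

variable {H : Type*} [NormedAddCommGroup H] [InnerProductSpace ℝ H]

theorem norm_sub_smul_sub_sq_le {x z φ : H} {γ δ : ℝ} (hγ : 0 ≤ γ) (hδ : 0 ≤ δ)
    (h : δ * ‖φ‖ ^ 2 ≤ ⟪x - z, φ⟫) :
    ‖x - (γ * δ) • φ - z‖ ^ 2 ≤ ‖x - z‖ ^ 2 - γ * (2 - γ) * (δ ^ 2 * ‖φ‖ ^ 2) := by
  have hexpand : ‖x - (γ * δ) • φ - z‖ ^ 2 =
      ‖x - z‖ ^ 2 - 2 * (γ * δ) * ⟪x - z, φ⟫ + (γ * δ) ^ 2 * ‖φ‖ ^ 2 := by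
    rw [sub_right_comm, norm_sub_sq_real, real_inner_smul_right, norm_smul, mul_pow,
      Real.norm_eq_abs, sq_abs]
    ring
  rw [hexpand]
  nlinarith [mul_le_mul_of_nonneg_left h (mul_nonneg hγ hδ)]

theorem inner_add_sub_add_nonneg_of_monotone {A : H → Set H} {B : H → H}
    (hAmono : ∀ u v : H, ∀ a ∈ A u, ∀ b ∈ A v, 0 ≤ ⟪a - b, u - v⟫)
    (hBmono : ∀ u v : H, 0 ≤ ⟪B u - B v, u - v⟫)
    {u v a b : H} (ha : a ∈ A u) (hb : b ∈ A v) :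
    0 ≤ ⟪(a + B u) - (b + B v), u - v⟫ := by
  rw [add_sub_add_comm, inner_add_left]
  exact add_nonneg (hAmono u v a ha b hb) (hBmono u v)

variable {x y : H} {σ lam : ℝ}

theorem mul_norm_sq_le_inner_sub_smul (hlam : 0 ≤ lam) (h : lam * ‖y‖ ≤ σ * ‖x‖) :
    (1 - σ) * ‖x‖ ^ 2 ≤ ⟪x, x - lam • y⟫ := by
  rw [inner_sub_right, real_inner_self_eq_norm_sq, real_inner_smul_right]
  nlinarith [mul_le_mul_of_nonneg_left (real_inner_le_norm x y) hlam,
    mul_le_mul_of_nonneg_left h (norm_nonneg x)]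

theorem norm_sub_smul_le (hlam : 0 ≤ lam) (h : lam * ‖y‖ ≤ σ * ‖x‖) :
    ‖x - lam • y‖ ≤ (1 + σ) * ‖x‖ :=
  calc ‖x - lam • y‖ ≤ ‖x‖ + lam * ‖y‖ := by
        simpa only [norm_smul, Real.norm_of_nonneg hlam] using norm_sub_le x (lam • y)
    _ ≤ (1 + σ) * ‖x‖ := by linarith

theorem sq_mul_norm_sq_le_inner_sq_div (hσ0 : 0 ≤ σ) (hσ1 : σ ≤ 1) (hlam : 0 ≤ lam)
    (h : lam * ‖y‖ ≤ σ * ‖x‖) (hφ : x - lam • y ≠ 0) :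
    ((1 - σ) / (1 + σ)) ^ 2 * ‖x‖ ^ 2 ≤ ⟪x, x - lam • y⟫ ^ 2 / ‖x - lam • y‖ ^ 2 := by
  have hlow := mul_norm_sq_le_inner_sub_smul hlam h
  have hup := norm_sub_smul_le hlam h
  have hφpos : 0 < ‖x - lam • y‖ := norm_pos_iff.mpr hφ
  rw [div_pow, div_mul_eq_mul_div, div_le_div_iff₀ (by positivity) (by positivity)]
  calc (1 - σ) ^ 2 * ‖x‖ ^ 2 * ‖x - lam • y‖ ^ 2
      ≤ ((1 - σ) * ‖x‖ ^ 2) ^ 2 * (1 + σ) ^ 2 := by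
        have := pow_le_pow_left₀ hφpos.le hup 2
        nlinarith [mul_le_mul_of_nonneg_left this
          (by positivity : 0 ≤ (1 - σ) ^ 2 * ‖x‖ ^ 2)]
    _ ≤ ⟪x, x - lam • y⟫ ^ 2 * (1 + σ) ^ 2 := by
        gcongr

end

theorem contraction_step_residual_inequality_general
    {H : Type*} [NormedAddCommGroup H] [InnerProductSpace ℝ H]
    (σ γ lam : ℝ) (hσ : σ ∈ Set.Ioo (0 : ℝ) 1) (hγ : γ ∈ Set.Ioo (0 : ℝ) 2) (hlam : 0 < lam)
    (A : H → Set H) (B : H → H)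
    (hAmono : ∀ u v : H, ∀ a ∈ A u, ∀ b ∈ A v, 0 ≤ ⟪a - b, u - v⟫)
    (hBmono : ∀ u v : H, 0 ≤ ⟪B u - B v, u - v⟫)
    (ustar : H) (hstar : -B ustar ∈ A ustar)
    (w v : H)
    (hfb : ∃ a ∈ A v, w - lam • B w = v + lam • a)
    (hls : lam * ‖B w - B v‖ ≤ σ * ‖w - v‖)
    (φ : H) (hφdef : φ = (w - v) - lam • (B w - B v)) (hφ : φ ≠ 0)
    (δ : ℝ) (hδ : δ = ⟪w - v, φ⟫ / ‖φ‖ ^ 2)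
    (uplus : H) (huplus : uplus = w - (γ * δ) • φ) :
    ‖uplus - ustar‖ ^ 2 ≤
      ‖w - ustar‖ ^ 2 - γ * (2 - γ) * ((1 - σ) / (1 + σ)) ^ 2 * ‖w - v‖ ^ 2 := by
  obtain ⟨a, ha, hfba⟩ := hfb
  have hφa : φ = lam • (a + B v) := by
    rw [hφdef]
    linear_combination (norm := module) hfba
  have hsep : 0 ≤ ⟪v - ustar, φ⟫ := by
    have := inner_add_sub_add_nonneg_of_monotone hAmono hBmono ha hstar
    rw [neg_add_cancel, sub_zero, real_inner_comm] at this
    rw [hφa, real_inner_smul_right]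
    exact mul_nonneg hlam.le this
  have hφnorm : 0 < ‖φ‖ ^ 2 := by positivity
  have hδφ : δ * ‖φ‖ ^ 2 = ⟪w - v, φ⟫ := by rw [hδ, div_mul_cancel₀ _ hφnorm.ne']
  have hp : 0 ≤ ⟪w - v, φ⟫ := by
    rw [hφdef]
    exact (mul_nonneg (sub_nonneg.mpr hσ.2.le) (sq_nonneg _)).trans
      (mul_norm_sq_le_inner_sub_smul hlam.le hls)
  have hδ0 : 0 ≤ δ := by rw [hδ]; positivity
  have hstep := norm_sub_smul_sub_sq_le (z := ustar) hγ.1.le hδ0 <| by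
    rw [hδφ, ← sub_add_sub_cancel w v ustar, inner_add_left]
    linarith
  have hratio : ((1 - σ) / (1 + σ)) ^ 2 * ‖w - v‖ ^ 2 ≤ δ ^ 2 * ‖φ‖ ^ 2 := by
    rw [show δ ^ 2 * ‖φ‖ ^ 2 = ⟪w - v, φ⟫ ^ 2 / ‖φ‖ ^ 2 by rw [hδ]; field_simp]
    subst hφdef
    exact sq_mul_norm_sq_le_inner_sq_div hσ.1.le hσ.2.le hlam.le hls hφ
  rw [huplus]
  nlinarith [mul_le_mul_of_nonneg_left hratio (mul_nonneg hγ.1.le (sub_nonneg.mpr hγ.2.le))]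

/-- One-step contraction inequality in terms of the residual:
`‖u⁺ - u*‖² ≤ ‖w - u*‖² - γ(2 - γ)((1 - σ)/(1 + σ))²‖w - v‖²`. -/
theorem contraction_step_residual_inequality
    {H : Type*} [NormedAddCommGroup H] [InnerProductSpace ℝ H] [CompleteSpace H]
    (σ γ lam : ℝ) (hσ : σ ∈ Set.Ioo (0 : ℝ) 1) (hγ : γ ∈ Set.Ioo (0 : ℝ) 2) (hlam : 0 < lam)
    (A : H → Set H) (B : H → H)
    (hAmono : ∀ u v : H, ∀ a ∈ A u, ∀ b ∈ A v, 0 ≤ ⟪a - b, u - v⟫)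
    (hBmono : ∀ u v : H, 0 ≤ ⟪B u - B v, u - v⟫)
    (ustar : H) (hstar : -B ustar ∈ A ustar)
    (w v : H)
    (hfb : ∃ a ∈ A v, w - lam • B w = v + lam • a)
    (hls : lam * ‖B w - B v‖ ≤ σ * ‖w - v‖)
    (φ : H) (hφdef : φ = (w - v) - lam • (B w - B v)) (hφ : φ ≠ 0)
    (δ : ℝ) (hδ : δ = ⟪w - v, φ⟫ / ‖φ‖ ^ 2)
    (uplus : H) (huplus : uplus = w - (γ * δ) • φ) :
    ‖uplus - ustar‖ ^ 2 ≤
      ‖w - ustar‖ ^ 2 - γ * (2 - γ) * ((1 - σ) / (1 + σ)) ^ 2 * ‖w - v‖ ^ 2 :=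
  contraction_step_residual_inequality_general σ γ lam hσ hγ hlam A B hAmono hBmono ustar hstar w v
    hfb hls φ hφdef hφ δ hδ uplus huplus
end

section
/- Let σ ∈ (0,1), γ ∈ (0,2), λ > 0, let A : H → Set H and B : H → H be monotone, and let u* ∈ Ω. Suppose w, v ∈ H satisfy w − λB(w) ∈ v + λA(v) and λ‖B(w) − B(v)‖ ≤ σ‖w − v‖, set φ = (w − v) − λ(B(w) − B(v)), assume φ ≠ 0, and let δ = ⟨w − v, φ⟩/‖φ‖² and u⁺ = w − γδφ. Then ‖u⁺ − u*‖² ≤ ‖w − u*‖² − E·‖u⁺ − w‖², where E = ((2 − γ)/γ)·((1 − σ)/(1 + σ))⁴. -/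
/-!
Since `a ∈ A v` with `w - λ B w = v + λ a`, the direction is `φ = λ (a + B v)`, and monotonicity of
`A + B` at the zero `u*` gives `⟪v - u*, φ⟫ ≥ 0`. Hence the half-space `{x | ⟪w - x, φ⟫ ≥ δ ‖φ‖²}`
contains `u*`, and `u⁺` is a relaxed projection of `w` onto it, which yields the estimate with the
constant `(2 - γ)/γ`. The Lipschitz-type bound on `B` gives `δ ≥ 0`, and `E ≤ (2 - γ)/γ`.
-/

open RealInnerProductSpace

section

variable {H : Type*} [NormedAddCommGroup H] [InnerProductSpace ℝ H]

theorem norm_sub_smul_sub_sq_le_of_mul_norm_sq_le_inner {x z φ : H} {γ t : ℝ}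
    (hγ : 0 < γ) (ht : 0 ≤ t) (h : t * ‖φ‖ ^ 2 ≤ ⟪x - z, φ⟫) :
    ‖x - (γ * t) • φ - z‖ ^ 2 ≤ ‖x - z‖ ^ 2 - (2 - γ) / γ * ‖(γ * t) • φ‖ ^ 2 := by
  have hexpand : ‖x - (γ * t) • φ - z‖ ^ 2
      = ‖x - z‖ ^ 2 - 2 * (γ * t) * ⟪x - z, φ⟫ + (γ * t) ^ 2 * ‖φ‖ ^ 2 := by
    rw [sub_right_comm, norm_sub_sq_real, real_inner_smul_right, norm_smul, Real.norm_eq_abs,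
      mul_pow, sq_abs]
    ring
  have hstep : ‖(γ * t) • φ‖ ^ 2 = (γ * t) ^ 2 * ‖φ‖ ^ 2 := by
    rw [norm_smul, Real.norm_eq_abs, mul_pow, sq_abs]
  have hmul : 2 * (γ * t) * (t * ‖φ‖ ^ 2) ≤ 2 * (γ * t) * ⟪x - z, φ⟫ :=
    mul_le_mul_of_nonneg_left h (by positivity)
  rw [hexpand, hstep]
  field_simp
  nlinarith

theorem one_sub_mul_norm_sq_le_inner_sub {x y : H} {σ : ℝ} (h : ‖y‖ ≤ σ * ‖x‖) :
    (1 - σ) * ‖x‖ ^ 2 ≤ ⟪x, x - y⟫ := by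
  rw [inner_sub_right, real_inner_self_eq_norm_sq]
  nlinarith [real_inner_le_norm x y, norm_nonneg x]

theorem inner_sub_add_apply_nonneg_of_neg_mem {A : H → Set H} {B : H → H}
    (hA : ∀ u v : H, ∀ a ∈ A u, ∀ b ∈ A v, 0 ≤ ⟪a - b, u - v⟫)
    (hB : ∀ u v : H, 0 ≤ ⟪B u - B v, u - v⟫)
    {u v a : H} (hu : -B u ∈ A u) (ha : a ∈ A v) :
    0 ≤ ⟪v - u, a + B v⟫ := by
  have hsplit : a + B v = (a - -B u) + (B v - B u) := by abel
  rw [real_inner_comm, hsplit, inner_add_left]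
  exact add_nonneg (hA v u a ha (-B u) hu) (hB v u)

end

theorem one_sub_div_one_add_pow_le_one {σ : ℝ} (hσ0 : 0 ≤ σ) (hσ1 : σ ≤ 1) (n : ℕ) :
    ((1 - σ) / (1 + σ)) ^ n ≤ 1 := by
  apply pow_le_one₀ (div_nonneg (by linarith) (by linarith))
  rw [div_le_one (by linarith)]
  linarith

theorem contraction_step_displacement_inequality_general
    {H : Type*} [NormedAddCommGroup H] [InnerProductSpace ℝ H]
    (σ γ lam : ℝ) (hσ : σ ∈ Set.Ioo (0 : ℝ) 1) (hγ : γ ∈ Set.Ioo (0 : ℝ) 2) (hlam : 0 < lam)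
    (A : H → Set H) (B : H → H)
    (hAmono : ∀ u v : H, ∀ a ∈ A u, ∀ b ∈ A v, 0 ≤ ⟪a - b, u - v⟫)
    (hBmono : ∀ u v : H, 0 ≤ ⟪B u - B v, u - v⟫)
    (ustar : H) (hstar : -B ustar ∈ A ustar)
    (w v : H)
    (hfb : ∃ a ∈ A v, w - lam • B w = v + lam • a)
    (hls : lam * ‖B w - B v‖ ≤ σ * ‖w - v‖)
    (φ : H) (hφdef : φ = (w - v) - lam • (B w - B v))
    (δ : ℝ) (hδ : δ = ⟪w - v, φ⟫ / ‖φ‖ ^ 2)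
    (uplus : H) (huplus : uplus = w - (γ * δ) • φ)
    (E : ℝ) (hE : E = ((2 - γ) / γ) * ((1 - σ) / (1 + σ)) ^ 4) :
    ‖uplus - ustar‖ ^ 2 ≤ ‖w - ustar‖ ^ 2 - E * ‖uplus - w‖ ^ 2 := by
  obtain ⟨a, haA, hfb⟩ := hfb
  have hφa : φ = lam • (a + B v) := by
    have hla : lam • a = w - lam • B w - v := by rw [hfb]; abel
    rw [hφdef, smul_add, hla, smul_sub]
    abel
  have hvφ : 0 ≤ ⟪v - ustar, φ⟫ := by
    rw [hφa, real_inner_smul_right]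
    exact mul_nonneg hlam.le (inner_sub_add_apply_nonneg_of_neg_mem hAmono hBmono hstar haA)
  have hδφ : δ * ‖φ‖ ^ 2 = ⟪w - v, φ⟫ := by
    rw [hδ]
    exact div_mul_cancel_of_imp fun h ↦ by simp_all
  have hwvφ : (1 - σ) * ‖w - v‖ ^ 2 ≤ ⟪w - v, φ⟫ := by
    rw [hφdef]
    refine one_sub_mul_norm_sq_le_inner_sub ?_
    rwa [norm_smul, Real.norm_of_nonneg hlam.le]
  have hδ0 : 0 ≤ δ := by
    rw [hδ]
    exact div_nonneg ((mul_nonneg (by linarith [hσ.2]) (sq_nonneg _)).trans hwvφ) (sq_nonneg _)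
  have hkey : δ * ‖φ‖ ^ 2 ≤ ⟪w - ustar, φ⟫ := by
    rw [hδφ, ← sub_add_sub_cancel w v ustar, inner_add_left]
    linarith
  have hstep := norm_sub_smul_sub_sq_le_of_mul_norm_sq_le_inner hγ.1 hδ0 hkey
  have hEle : E ≤ (2 - γ) / γ := by
    rw [hE]
    exact mul_le_of_le_one_right (div_pos (by linarith [hγ.2]) hγ.1).le
      (one_sub_div_one_add_pow_le_one hσ.1.le hσ.2.le 4)
  have hdisp : ‖uplus - w‖ = ‖(γ * δ) • φ‖ := by
    rw [huplus, sub_sub_cancel_left, norm_neg]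
  rw [← huplus, ← hdisp] at hstep
  nlinarith [sq_nonneg ‖uplus - w‖]

/-- One-step contraction inequality in terms of the displacement:
`‖u⁺ - u*‖² ≤ ‖w - u*‖² - E‖u⁺ - w‖²` with `E = ((2 - γ)/γ)((1 - σ)/(1 + σ))⁴`. -/
theorem contraction_step_displacement_inequality
    {H : Type*} [NormedAddCommGroup H] [InnerProductSpace ℝ H] [CompleteSpace H]
    (σ γ lam : ℝ) (hσ : σ ∈ Set.Ioo (0 : ℝ) 1) (hγ : γ ∈ Set.Ioo (0 : ℝ) 2) (hlam : 0 < lam)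
    (A : H → Set H) (B : H → H)
    (hAmono : ∀ u v : H, ∀ a ∈ A u, ∀ b ∈ A v, 0 ≤ ⟪a - b, u - v⟫)
    (hBmono : ∀ u v : H, 0 ≤ ⟪B u - B v, u - v⟫)
    (ustar : H) (hstar : -B ustar ∈ A ustar)
    (w v : H)
    (hfb : ∃ a ∈ A v, w - lam • B w = v + lam • a)
    (hls : lam * ‖B w - B v‖ ≤ σ * ‖w - v‖)
    (φ : H) (hφdef : φ = (w - v) - lam • (B w - B v)) (hφ : φ ≠ 0)
    (δ : ℝ) (hδ : δ = ⟪w - v, φ⟫ / ‖φ‖ ^ 2)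
    (uplus : H) (huplus : uplus = w - (γ * δ) • φ)
    (E : ℝ) (hE : E = ((2 - γ) / γ) * ((1 - σ) / (1 + σ)) ^ 4) :
    ‖uplus - ustar‖ ^ 2 ≤ ‖w - ustar‖ ^ 2 - E * ‖uplus - w‖ ^ 2 :=
  contraction_step_displacement_inequality_general σ γ lam hσ hγ hlam A B hAmono hBmono ustar hstar
    w v hfb hls φ hφdef δ hδ uplus huplus E hE
end

section
/- Let A : H → Set H be β-strongly monotone with β > 0, let B : H → H be monotone, let λ > 0, let u* ∈ Ω, and let w, v ∈ H satisfy w − λB(w) ∈ v + λA(v). Then ⟨w − u*, φ(w, v)⟩ ≥ ⟨w − v, φ(w, v)⟩ + λβ‖v − u*‖², where φ(w, v) = (w − v) − λ(B(w) − B(v)). -/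
/-!
The forward–backward step gives `φ(w, v) = λ (a + B v)` with `a ∈ A v`, an element of
`λ (A + B) v`. Since `0 ∈ (A + B) u*` and `A + B` is `β`-strongly monotone,
`⟪v - u*, φ(w, v)⟫ ≥ λβ‖v - u*‖²`; the claim follows from `w - u* = (w - v) + (v - u*)`.
-/

open RealInnerProductSpace

section ForwardBackward

variable {H : Type*} [NormedAddCommGroup H] [InnerProductSpace ℝ H]

lemma forwardBackward_residual_eq_smul {B : H → H} {lam : ℝ} {w v a : H}
    (hfb : w - lam • B w = v + lam • a) :
    (w - v) - lam • (B w - B v) = lam • (a + B v) := by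
  calc (w - v) - lam • (B w - B v)
      = (w - lam • B w) - v + lam • B v := by rw [smul_sub]; abel
    _ = lam • (a + B v) := by rw [hfb, smul_add]; abel

lemma le_inner_add_sub_solution_of_stronglyMonotone {A : H → Set H} {B : H → H} {β : ℝ}
    (hAsmono : ∀ u v : H, ∀ a ∈ A u, ∀ b ∈ A v, β * ‖u - v‖ ^ 2 ≤ ⟪a - b, u - v⟫)
    (hBmono : ∀ u v : H, 0 ≤ ⟪B u - B v, u - v⟫)
    {ustar : H} (hstar : -B ustar ∈ A ustar) {v a : H} (ha : a ∈ A v) :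
    β * ‖v - ustar‖ ^ 2 ≤ ⟪a + B v, v - ustar⟫ := by
  have hsplit : a + B v = (a - -B ustar) + (B v - B ustar) := by abel
  rw [hsplit, inner_add_left]
  linarith [hAsmono v ustar a ha (-B ustar) hstar, hBmono v ustar]

end ForwardBackward

theorem phi_inner_strongly_monotone_bound_general
    {H : Type*} [NormedAddCommGroup H] [InnerProductSpace ℝ H]
    (A : H → Set H) (B : H → H) (β : ℝ)
    (hAsmono : ∀ u v : H, ∀ a ∈ A u, ∀ b ∈ A v, β * ‖u - v‖ ^ 2 ≤ ⟪a - b, u - v⟫)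
    (hBmono : ∀ u v : H, 0 ≤ ⟪B u - B v, u - v⟫)
    (lam : ℝ) (hlam : 0 < lam)
    (ustar : H) (hstar : -B ustar ∈ A ustar)
    (w v : H)
    (hfb : ∃ a ∈ A v, w - lam • B w = v + lam • a) :
    ⟪w - v, (w - v) - lam • (B w - B v)⟫ + lam * β * ‖v - ustar‖ ^ 2 ≤
      ⟪w - ustar, (w - v) - lam • (B w - B v)⟫ := by
  obtain ⟨a, ha, heq⟩ := hfb
  have hsplit : w - ustar = (w - v) + (v - ustar) := by abel
  have hmono := le_inner_add_sub_solution_of_stronglyMonotone hAsmono hBmono hstar ha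
  have hscale : ⟪v - ustar, lam • (a + B v)⟫ = lam * ⟪a + B v, v - ustar⟫ := by
    rw [real_inner_smul_right, real_inner_comm]
  rw [forwardBackward_residual_eq_smul heq, hsplit, inner_add_left, hscale]
  linarith [mul_le_mul_of_nonneg_left hmono hlam.le]

/-- For a `β`-strongly monotone `A` and monotone `B`, a solution `u*` and a
forward–backward point `v` of `w`, one has
`⟨w - u*, φ(w, v)⟩ ≥ ⟨w - v, φ(w, v)⟩ + λβ‖v - u*‖²`. -/
theorem phi_inner_strongly_monotone_bound
    {H : Type*} [NormedAddCommGroup H] [InnerProductSpace ℝ H] [CompleteSpace H]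
    (A : H → Set H) (B : H → H) (β : ℝ) (hβ : 0 < β)
    (hAsmono : ∀ u v : H, ∀ a ∈ A u, ∀ b ∈ A v, β * ‖u - v‖ ^ 2 ≤ ⟪a - b, u - v⟫)
    (hBmono : ∀ u v : H, 0 ≤ ⟪B u - B v, u - v⟫)
    (lam : ℝ) (hlam : 0 < lam)
    (ustar : H) (hstar : -B ustar ∈ A ustar)
    (w v : H)
    (hfb : ∃ a ∈ A v, w - lam • B w = v + lam • a) :
    ⟪w - v, (w - v) - lam • (B w - B v)⟫ + lam * β * ‖v - ustar‖ ^ 2 ≤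
      ⟪w - ustar, (w - v) - lam • (B w - B v)⟫ :=
  phi_inner_strongly_monotone_bound_general A B β hAsmono hBmono lam hlam ustar hstar w v hfb
end

section
/- Assume the Algorithm (IFB) hypotheses, where A : H → Set H is maximal monotone and β-strongly monotone (β > 0), B : H → H is monotone and continuous, and u* ∈ Ω. Then for every k ≥ 1, ‖u_{k+1} − u*‖² ≤ ‖w_k − u*‖² − E·‖u_{k+1} − w_k‖² − 2Q·‖v_k − u*‖², where E = ((2 − γ)/γ)·((1 − σ)/(1 + σ))⁴ and Q = γλ_min β(1 − σ)²/(1 + σ)². -/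
/-!
The residual `φ_k` of the forward–backward step equals `λ_k (a + B v_k)` with `a ∈ A v_k`, so strong
monotonicity of `A` and monotonicity of `B` give `⟪φ_k, v_k - u*⟫ ≥ λ_k β ‖v_k - u*‖²`. Together with
`δ_k ‖φ_k‖² = ⟪w_k - v_k, φ_k⟫`, expanding the relaxed projection `u_{k+1} = w_k - γ δ_k φ_k` yields
`‖u_{k+1} - u*‖² ≤ ‖w_k - u*‖² - ((2 - γ)/γ) ‖u_{k+1} - w_k‖² - 2 γ δ_k λ_k β ‖v_k - u*‖²`.
The step-size condition gives `⟪w_k - v_k, φ_k⟫ ≥ (1 - σ) ‖w_k - v_k‖²` and `‖φ_k‖ ≤ (1 + σ) ‖w_k - v_k‖`,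
hence `δ_k ≥ (1 - σ)/(1 + σ)²`, which bounds both coefficients by `E` and `Q`.
-/

open RealInnerProductSpace

section InnerProductSpace

variable {H : Type*} [NormedAddCommGroup H] [InnerProductSpace ℝ H]

theorem one_sub_mul_norm_sq_le_inner_sub_smul {x y : H} {t σ : ℝ} (ht : 0 ≤ t)
    (hy : t * ‖y‖ ≤ σ * ‖x‖) : (1 - σ) * ‖x‖ ^ 2 ≤ ⟪x, x - t • y⟫ := by
  have hxy : ⟪x, y⟫ ≤ ‖x‖ * ‖y‖ := real_inner_le_norm x y
  rw [inner_sub_right, real_inner_smul_right, real_inner_self_eq_norm_sq]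
  nlinarith [mul_le_mul_of_nonneg_left hxy ht, mul_le_mul_of_nonneg_left hy (norm_nonneg x)]

theorem norm_sub_smul_le_one_add_mul {x y : H} {t σ : ℝ} (ht : 0 ≤ t)
    (hy : t * ‖y‖ ≤ σ * ‖x‖) : ‖x - t • y‖ ≤ (1 + σ) * ‖x‖ := by
  calc ‖x - t • y‖ ≤ ‖x‖ + t * ‖y‖ := by
        simpa [norm_smul, abs_of_nonneg ht] using norm_sub_le x (t • y)
    _ ≤ (1 + σ) * ‖x‖ := by linarith

theorem div_sq_le_inner_div_norm_sq {x φ : H} {c C : ℝ} (hc : 0 ≤ c)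
    (hinner : c * ‖x‖ ^ 2 ≤ ⟪x, φ⟫) (hnorm : ‖φ‖ ≤ C * ‖x‖) (hφ : φ ≠ 0) :
    c / C ^ 2 ≤ ⟪x, φ⟫ / ‖φ‖ ^ 2 := by
  have hφpos : 0 < ‖φ‖ := norm_pos_iff.mpr hφ
  have hC : 0 < C := pos_of_mul_pos_left (hφpos.trans_le hnorm) (norm_nonneg x)
  have hnorm_sq : ‖φ‖ ^ 2 ≤ C ^ 2 * ‖x‖ ^ 2 := by
    rw [← mul_pow]; exact pow_le_pow_left₀ hφpos.le hnorm 2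
  rw [div_le_div_iff₀ (by positivity) (by positivity)]
  nlinarith [mul_le_mul_of_nonneg_left hnorm_sq hc, mul_le_mul_of_nonneg_left hinner (sq_nonneg C)]

theorem one_sub_div_one_add_sq_le_inner_div_norm_sq_s15 {x y : H} {t σ : ℝ} (ht : 0 ≤ t)
    (hσ : σ ≤ 1) (hy : t * ‖y‖ ≤ σ * ‖x‖) (hne : x - t • y ≠ 0) :
    (1 - σ) / (1 + σ) ^ 2 ≤ ⟪x, x - t • y⟫ / ‖x - t • y‖ ^ 2 :=
  div_sq_le_inner_div_norm_sq (by linarith) (one_sub_mul_norm_sq_le_inner_sub_smul ht hy)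
    (norm_sub_smul_le_one_add_mul ht hy) hne

theorem norm_sub_sq_le_of_relaxed_projection {w v z φ u' : H} {γ δ m : ℝ} (hγ : 0 < γ)
    (hδ0 : 0 ≤ δ) (hδ : δ * ‖φ‖ ^ 2 = ⟪w - v, φ⟫) (hm : m ≤ ⟪φ, v - z⟫)
    (hu' : u' = w - (γ * δ) • φ) :
    ‖u' - z‖ ^ 2 ≤ ‖w - z‖ ^ 2 - (2 - γ) / γ * ‖u' - w‖ ^ 2 - 2 * γ * δ * m := by
  subst hu'
  have hexpand : ‖w - (γ * δ) • φ - z‖ ^ 2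
      = ‖w - z‖ ^ 2 - 2 * (γ * δ) * ⟪w - z, φ⟫ + (γ * δ) ^ 2 * ‖φ‖ ^ 2 := by
    rw [sub_right_comm, norm_sub_sq_real, real_inner_smul_right, norm_smul, Real.norm_eq_abs,
      mul_pow, sq_abs]
    ring
  have hdisp : ‖w - (γ * δ) • φ - w‖ ^ 2 = (γ * δ) ^ 2 * ‖φ‖ ^ 2 := by
    rw [sub_sub_cancel_left, norm_neg, norm_smul, Real.norm_eq_abs, mul_pow, sq_abs]
  have hsplit : ⟪w - z, φ⟫ = ⟪w - v, φ⟫ + ⟪φ, v - z⟫ := by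
    rw [real_inner_comm (v - z), ← inner_add_left, sub_add_sub_cancel]
  have hcoeff : (2 - γ) / γ * ((γ * δ) ^ 2 * ‖φ‖ ^ 2) = (2 - γ) * γ * (δ * (δ * ‖φ‖ ^ 2)) := by
    field_simp
  rw [hexpand, hdisp, hsplit, ← hδ, hcoeff]
  linarith [mul_le_mul_of_nonneg_left hm (by positivity : 0 ≤ 2 * γ * δ)]

theorem mul_norm_sq_le_inner_add_of_strongly_monotone {A : H → Set H} {B : H → H} {β : ℝ}
    (hA : ∀ u v : H, ∀ a ∈ A u, ∀ b ∈ A v, β * ‖u - v‖ ^ 2 ≤ ⟪a - b, u - v⟫)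
    (hB : ∀ u v : H, 0 ≤ ⟪B u - B v, u - v⟫) {u v a : H} (ha : a ∈ A v) (hu : -B u ∈ A u) :
    β * ‖v - u‖ ^ 2 ≤ ⟪a + B v, v - u⟫ := by
  have hsplit : ⟪a + B v, v - u⟫ = ⟪a - -B u, v - u⟫ + ⟪B v - B u, v - u⟫ := by
    rw [← inner_add_left]; congr 1; abel
  linarith [hA v u a ha (-B u) hu, hB v u]

theorem forward_backward_residual_eq {B : H → H} {w v a : H} {t : ℝ}
    (h : w - t • B w = v + t • a) : (w - v) - t • (B w - B v) = t • (a + B v) := by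
  rw [smul_sub, smul_add, (sub_eq_of_eq_add' h).symm]
  abel

end InnerProductSpace

theorem mul_one_sub_div_one_add_pow_le {c σ : ℝ} (hc : 0 ≤ c) (hσ0 : 0 ≤ σ) (hσ1 : σ ≤ 1)
    (n : ℕ) : c * ((1 - σ) / (1 + σ)) ^ n ≤ c := by
  refine mul_le_of_le_one_right hc (pow_le_one₀ (div_nonneg (by linarith) (by linarith)) ?_)
  rw [div_le_one (by linarith)]
  linarith

theorem ifb_strongly_monotone_step_inequality_general
    {H : Type*} [NormedAddCommGroup H] [InnerProductSpace ℝ H]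
    (A : H → Set H) (B : H → H) (β : ℝ) (hβ : 0 < β)
    (hAsmono : ∀ u v : H, ∀ a ∈ A u, ∀ b ∈ A v, β * ‖u - v‖ ^ 2 ≤ ⟪a - b, u - v⟫)
    (hBmono : ∀ u v : H, 0 ≤ ⟪B u - B v, u - v⟫)
    (ustar : H) (hstar : -B ustar ∈ A ustar)
    (σ γ s lamMin : ℝ)
    (hσ : σ ∈ Set.Ioo (0 : ℝ) 1) (hγ : γ ∈ Set.Ioo (0 : ℝ) 2)
    (hlamMin : 0 < lamMin)
    (u w v : ℕ → H) (lam : ℕ → ℝ) (φ : ℕ → H)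
    (hlam : ∀ k : ℕ, lam k ∈ Set.Icc lamMin s)
    (hfb : ∀ k : ℕ, 1 ≤ k → ∃ a ∈ A (v k), w k - lam k • B (w k) = v k + lam k • a)
    (hls : ∀ k : ℕ, 1 ≤ k → lam k * ‖B (w k) - B (v k)‖ ≤ σ * ‖w k - v k‖)
    (hφdef : ∀ k : ℕ, φ k = (w k - v k) - lam k • (B (w k) - B (v k)))
    (hφ : ∀ k : ℕ, 1 ≤ k → φ k ≠ 0)
    (hupd : ∀ k : ℕ, 1 ≤ k →
      u (k + 1) = w k - (γ * (⟪w k - v k, φ k⟫ / ‖φ k‖ ^ 2)) • φ k)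
    (E Q : ℝ) (hE : E = ((2 - γ) / γ) * ((1 - σ) / (1 + σ)) ^ 4)
    (hQ : Q = γ * lamMin * β * (1 - σ) ^ 2 / (1 + σ) ^ 2) :
    ∀ k : ℕ, 1 ≤ k →
      ‖u (k + 1) - ustar‖ ^ 2 ≤
        ‖w k - ustar‖ ^ 2 - E * ‖u (k + 1) - w k‖ ^ 2 - 2 * Q * ‖v k - ustar‖ ^ 2 := by
  intro k hk
  obtain ⟨hσ0, hσ1⟩ := hσ
  obtain ⟨hγ0, hγ2⟩ := hγ
  obtain ⟨a, ha, hfbk⟩ := hfb k hk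
  have hlam0 : 0 < lam k := hlamMin.trans_le (hlam k).1
  have hδ_ge : (1 - σ) / (1 + σ) ^ 2 ≤ ⟪w k - v k, φ k⟫ / ‖φ k‖ ^ 2 := by
    have hne := hφ k hk
    rw [hφdef k] at hne ⊢
    exact one_sub_div_one_add_sq_le_inner_div_norm_sq_s15 hlam0.le hσ1.le (hls k hk) hne
  set δ := ⟪w k - v k, φ k⟫ / ‖φ k‖ ^ 2
  have hδ_mul : δ * ‖φ k‖ ^ 2 = ⟪w k - v k, φ k⟫ :=
    div_mul_cancel₀ _ (pow_ne_zero 2 (norm_ne_zero_iff.mpr (hφ k hk)))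
  have hmono : lam k * β * ‖v k - ustar‖ ^ 2 ≤ ⟪φ k, v k - ustar⟫ := by
    rw [hφdef, forward_backward_residual_eq hfbk, real_inner_smul_left, mul_assoc]
    exact mul_le_mul_of_nonneg_left
      (mul_norm_sq_le_inner_add_of_strongly_monotone hAsmono hBmono ha hstar) hlam0.le
  have hδ0 : 0 ≤ δ := (div_nonneg (by linarith) (by positivity)).trans hδ_ge
  have hstep := norm_sub_sq_le_of_relaxed_projection hγ0 hδ0 hδ_mul hmono (hupd k hk)
  have hE_le : E ≤ (2 - γ) / γ :=
    hE ▸ mul_one_sub_div_one_add_pow_le (div_nonneg (by linarith) hγ0.le) hσ0.le hσ1.le 4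
  have hQ_le : Q ≤ γ * δ * (lam k * β) := by
    calc Q = γ * (lamMin * β) * ((1 - σ) * ((1 - σ) / (1 + σ) ^ 2)) := by rw [hQ]; ring
      _ ≤ γ * (lam k * β) * (1 * δ) := by
        gcongr
        · exact (hlam k).1
        · linarith
      _ = γ * δ * (lam k * β) := by ring
  linarith [mul_le_mul_of_nonneg_right hE_le (sq_nonneg ‖u (k + 1) - w k‖),
    mul_le_mul_of_nonneg_right hQ_le (sq_nonneg ‖v k - ustar‖)]

/-- Under the Algorithm (IFB) hypotheses with `A` maximal and `β`-strongly
monotone and `B` monotone continuous, for every solution `u*` and every `k ≥ 1`: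
`‖u_{k+1} - u*‖² ≤ ‖w_k - u*‖² - E‖u_{k+1} - w_k‖² - 2Q‖v_k - u*‖²`,
with `E = ((2 - γ)/γ)((1 - σ)/(1 + σ))⁴` and `Q = γλ_min β(1 - σ)²/(1 + σ)²`. -/
theorem ifb_strongly_monotone_step_inequality
    {H : Type*} [NormedAddCommGroup H] [InnerProductSpace ℝ H] [CompleteSpace H]
    (A : H → Set H) (B : H → H) (β : ℝ) (hβ : 0 < β)
    (hAmono : ∀ u v : H, ∀ a ∈ A u, ∀ b ∈ A v, 0 ≤ ⟪a - b, u - v⟫)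
    (hAmax : ∀ u v : H, (∀ w : H, ∀ z ∈ A w, 0 ≤ ⟪u - w, v - z⟫) → v ∈ A u)
    (hAsmono : ∀ u v : H, ∀ a ∈ A u, ∀ b ∈ A v, β * ‖u - v‖ ^ 2 ≤ ⟪a - b, u - v⟫)
    (hBmono : ∀ u v : H, 0 ≤ ⟪B u - B v, u - v⟫)
    (hBcont : Continuous B)
    (ustar : H) (hstar : -B ustar ∈ A ustar)
    (σ γ s lamMin θbar : ℝ)
    (hσ : σ ∈ Set.Ioo (0 : ℝ) 1) (hγ : γ ∈ Set.Ioo (0 : ℝ) 2)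
    (hlamMin : 0 < lamMin) (hles : lamMin ≤ s)
    (u w v : ℕ → H) (lam θ : ℕ → ℝ) (φ : ℕ → H)
    (hlam : ∀ k : ℕ, lam k ∈ Set.Icc lamMin s)
    (hw : ∀ k : ℕ, 1 ≤ k → w k = u k + θ k • (u k - u (k - 1)))
    (hfb : ∀ k : ℕ, 1 ≤ k → ∃ a ∈ A (v k), w k - lam k • B (w k) = v k + lam k • a)
    (hls : ∀ k : ℕ, 1 ≤ k → lam k * ‖B (w k) - B (v k)‖ ≤ σ * ‖w k - v k‖)
    (hφdef : ∀ k : ℕ, φ k = (w k - v k) - lam k • (B (w k) - B (v k)))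
    (hφ : ∀ k : ℕ, 1 ≤ k → φ k ≠ 0)
    (hupd : ∀ k : ℕ, 1 ≤ k →
      u (k + 1) = w k - (γ * (⟪w k - v k, φ k⟫ / ‖φ k‖ ^ 2)) • φ k)
    (E Q : ℝ) (hE : E = ((2 - γ) / γ) * ((1 - σ) / (1 + σ)) ^ 4)
    (hQ : Q = γ * lamMin * β * (1 - σ) ^ 2 / (1 + σ) ^ 2)
    (hθ : ∀ k : ℕ, 0 ≤ θ k ∧ θ k ≤ θ (k + 1) ∧ θ (k + 1) ≤ θbar)
    (hθbar : θbar < E / (E + max 1 E)) :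
    ∀ k : ℕ, 1 ≤ k →
      ‖u (k + 1) - ustar‖ ^ 2 ≤
        ‖w k - ustar‖ ^ 2 - E * ‖u (k + 1) - w k‖ ^ 2 - 2 * Q * ‖v k - ustar‖ ^ 2 :=
  ifb_strongly_monotone_step_inequality_general A B β hβ hAsmono hBmono ustar hstar σ γ s lamMin hσ
    hγ hlamMin u w v lam φ hlam hfb hls hφdef hφ hupd E Q hE hQ
end

section
/- Assume the Algorithm (IFB) hypotheses, where A : H → Set H is maximal monotone and β-strongly monotone with 0 < β < 1/(γλ_min), B : H → H is monotone and continuous, and u* ∈ Ω. Set α = (1 − σ)²/(1 + σ)² and τ = 1 − (1/2)·α·min{γ(2 − γ), 2γλ_min β}. Then τ ∈ (0,1) and for every k ≥ 1, ‖u_{k+1} − u*‖² ≤ τ‖w_k − u*‖². -/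
open RealInnerProductSpace

set_option maxHeartbeats 1000000 in
private lemma ifb_aux (σ γ lamMin β α m N V W P Q F L : ℝ)
    (hσ0 : 0 < σ) (hσ1 : σ < 1) (hγ0 : 0 < γ) (hγ2 : γ < 2)
    (hlamMin : 0 < lamMin) (hβ : 0 < β)
    (hα : α = (1 - σ) ^ 2 / (1 + σ) ^ 2)
    (hm5 : m ≤ γ * (2 - γ)) (hm6 : m ≤ 2 * γ * lamMin * β) (hm0 : 0 ≤ m)
    (hN0 : 0 < N) (hF0 : 0 < F) (hV0 : 0 ≤ V)
    (hQ : lamMin * β * V ≤ Q)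
    (hPge : (1 - σ) * N ^ 2 ≤ P) (hFle : F ≤ (1 + σ) ^ 2 * N ^ 2)
    (hWle : W ≤ 2 * N ^ 2 + 2 * V)
    (hL : L = W - 2 * (γ * (P / F)) * (P + Q) + (γ * (P / F)) ^ 2 * F) :
    L ≤ (1 - (1 / 2) * α * m) * W := by
  have h1σ : (0:ℝ) < 1 + σ := by linarith
  have h1σ' : (0:ℝ) < 1 - σ := by linarith
  have hα' : α * (1 + σ) ^ 2 = (1 - σ) ^ 2 := by
    rw [hα]; field_simp
  have hα0 : 0 < α := by rw [hα]; positivity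
  have hP0 : 0 < P := lt_of_lt_of_le (mul_pos h1σ' (pow_pos hN0 2)) hPge
  have hQ0' : 0 ≤ Q := le_trans (mul_nonneg (mul_nonneg hlamMin.le hβ.le) hV0) hQ
  have hF' : F ≠ 0 := ne_of_gt hF0
  have hDF : (P / F) * F = P := div_mul_cancel₀ _ hF'
  have hL' : L = W - γ * (2 - γ) * ((P / F) * P) - 2 * γ * ((P / F) * Q) := by
    rw [hL]; linear_combination (γ ^ 2 * (P / F)) * hDF
  have hαN2 : (0:ℝ) ≤ α * N ^ 2 := mul_nonneg hα0.le (sq_nonneg N)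
  have hstepA : α * N ^ 2 ≤ (P / F) * P := by
    rw [div_mul_eq_mul_div, le_div_iff₀ hF0]
    have e : α * N ^ 2 * ((1 + σ) ^ 2 * N ^ 2) = ((1 - σ) * N ^ 2) ^ 2 := by
      linear_combination (N ^ 4) * hα'
    have hP2 : ((1 - σ) * N ^ 2) ^ 2 ≤ P ^ 2 :=
      pow_le_pow_left₀ (mul_nonneg h1σ'.le (sq_nonneg N)) hPge 2
    linarith [mul_le_mul_of_nonneg_left hFle hαN2, hP2, e]
  have hstepB : α ≤ P / F := by
    rw [le_div_iff₀ hF0]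
    have e2 : α * ((1 + σ) ^ 2 * N ^ 2) = (1 - σ) ^ 2 * N ^ 2 := by
      linear_combination (N ^ 2) * hα'
    have e3 : (1 - σ) ^ 2 * N ^ 2 ≤ (1 - σ) * N ^ 2 := by
      nlinarith [mul_nonneg (mul_nonneg hσ0.le h1σ'.le) (sq_nonneg N)]
    linarith [mul_le_mul_of_nonneg_left hFle hα0.le, e2, e3, hPge]
  have hγγ : (0:ℝ) ≤ γ * (2 - γ) := by nlinarith
  have t1 : m * (α * N ^ 2) ≤ (γ * (2 - γ)) * ((P / F) * P) := by
    have a1 := mul_le_mul_of_nonneg_left hstepA hγγ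
    have a2 := mul_le_mul_of_nonneg_right hm5 hαN2
    linarith
  have t2 : m * (α * V) ≤ (2 * γ) * ((P / F) * Q) := by
    have b1 : α * Q ≤ (P / F) * Q := mul_le_mul_of_nonneg_right hstepB hQ0'
    have b2 : α * (lamMin * β * V) ≤ α * Q := mul_le_mul_of_nonneg_left hQ hα0.le
    have b3 := mul_le_mul_of_nonneg_left (le_trans b2 b1)
      (show (0:ℝ) ≤ 2 * γ by linarith)
    have b4 := mul_le_mul_of_nonneg_right hm6 (mul_nonneg hα0.le hV0)
    linarith
  have t3 : m * (α * W) ≤ m * (α * (2 * N ^ 2 + 2 * V)) :=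
    mul_le_mul_of_nonneg_left hWle (mul_nonneg hm0 hα0.le) |>.trans_eq (by ring) |>.trans_eq' (by ring)
  rw [hL']
  linarith [t1, t2, t3]

set_option maxHeartbeats 1000000 in
/-- Under the Algorithm (IFB) hypotheses with `A` maximal and `β`-strongly
monotone, `0 < β < 1/(γλ_min)`, and `B` monotone continuous, setting
`α = (1 - σ)²/(1 + σ)²` and `τ = 1 - (1/2)·α·min{γ(2 - γ), 2γλ_min β}`, one has
`τ ∈ (0, 1)` and `‖u_{k+1} - u*‖² ≤ τ‖w_k - u*‖²` for every `k ≥ 1`. -/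
theorem ifb_linear_step_inequality
    {H : Type*} [NormedAddCommGroup H] [InnerProductSpace ℝ H] [CompleteSpace H]
    (A : H → Set H) (B : H → H) (β : ℝ)
    (hAmono : ∀ u v : H, ∀ a ∈ A u, ∀ b ∈ A v, 0 ≤ ⟪a - b, u - v⟫)
    (hAmax : ∀ u v : H, (∀ w : H, ∀ z ∈ A w, 0 ≤ ⟪u - w, v - z⟫) → v ∈ A u)
    (hAsmono : ∀ u v : H, ∀ a ∈ A u, ∀ b ∈ A v, β * ‖u - v‖ ^ 2 ≤ ⟪a - b, u - v⟫)
    (hBmono : ∀ u v : H, 0 ≤ ⟪B u - B v, u - v⟫)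
    (hBcont : Continuous B)
    (ustar : H) (hstar : -B ustar ∈ A ustar)
    (σ γ s lamMin θbar : ℝ)
    (hσ : σ ∈ Set.Ioo (0 : ℝ) 1) (hγ : γ ∈ Set.Ioo (0 : ℝ) 2)
    (hlamMin : 0 < lamMin) (hles : lamMin ≤ s)
    (hβ : 0 < β) (hβlt : β < 1 / (γ * lamMin))
    (u w v : ℕ → H) (lam θ : ℕ → ℝ) (φ : ℕ → H)
    (hlam : ∀ k : ℕ, lam k ∈ Set.Icc lamMin s)
    (hw : ∀ k : ℕ, 1 ≤ k → w k = u k + θ k • (u k - u (k - 1)))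
    (hfb : ∀ k : ℕ, 1 ≤ k → ∃ a ∈ A (v k), w k - lam k • B (w k) = v k + lam k • a)
    (hls : ∀ k : ℕ, 1 ≤ k → lam k * ‖B (w k) - B (v k)‖ ≤ σ * ‖w k - v k‖)
    (hφdef : ∀ k : ℕ, φ k = (w k - v k) - lam k • (B (w k) - B (v k)))
    (hφ : ∀ k : ℕ, 1 ≤ k → φ k ≠ 0)
    (hupd : ∀ k : ℕ, 1 ≤ k →
      u (k + 1) = w k - (γ * (⟪w k - v k, φ k⟫ / ‖φ k‖ ^ 2)) • φ k)
    (E : ℝ) (hE : E = ((2 - γ) / γ) * ((1 - σ) / (1 + σ)) ^ 4)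
    (hθ : ∀ k : ℕ, 0 ≤ θ k ∧ θ k ≤ θ (k + 1) ∧ θ (k + 1) ≤ θbar)
    (hθbar : θbar < E / (E + max 1 E))
    (α τ : ℝ) (hα : α = (1 - σ) ^ 2 / (1 + σ) ^ 2)
    (hτ : τ = 1 - (1 / 2) * α * min (γ * (2 - γ)) (2 * γ * lamMin * β)) :
    τ ∈ Set.Ioo (0 : ℝ) 1 ∧
    ∀ k : ℕ, 1 ≤ k → ‖u (k + 1) - ustar‖ ^ 2 ≤ τ * ‖w k - ustar‖ ^ 2 := by
  obtain ⟨hσ0, hσ1⟩ := hσ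
  obtain ⟨hγ0, hγ2⟩ := hγ
  have h1σ : (0:ℝ) < 1 + σ := by linarith
  have h1σ' : (0:ℝ) < 1 - σ := by linarith
  have hα0 : 0 < α := by rw [hα]; positivity
  have hα1 : α ≤ 1 := by
    rw [hα, div_le_one (by positivity)]
    nlinarith
  have hm5 : min (γ * (2 - γ)) (2 * γ * lamMin * β) ≤ γ * (2 - γ) := min_le_left _ _
  have hm6 : min (γ * (2 - γ)) (2 * γ * lamMin * β) ≤ 2 * γ * lamMin * β := min_le_right _ _
  have hm0 : 0 < min (γ * (2 - γ)) (2 * γ * lamMin * β) :=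
    lt_min (by nlinarith) (by positivity)
  have hm1 : min (γ * (2 - γ)) (2 * γ * lamMin * β) ≤ 1 := by
    have : γ * (2 - γ) ≤ 1 := by nlinarith [sq_nonneg (γ - 1)]
    linarith
  constructor
  · constructor
    · rw [hτ]
      linarith [mul_le_one₀ hα1 hm0.le hm1]
    · rw [hτ]
      linarith [mul_pos hα0 hm0]
  · intro k hk
    obtain ⟨a, ha, hfbk⟩ := hfb k hk
    have hlk := hlam k
    have hlk0 : 0 < lam k := lt_of_lt_of_le hlamMin hlk.1
    have hφk := hφdef k
    have hφne := hφ k hk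
    have hwv : w k - v k ≠ 0 := by
      intro h
      apply hφne
      have hwev : w k = v k := by rwa [sub_eq_zero] at h
      rw [hφk, h, hwev, sub_self, smul_zero, sub_zero]
    have hN0 : 0 < ‖w k - v k‖ := norm_pos_iff.mpr hwv
    have hF0 : 0 < ‖φ k‖ ^ 2 := pow_pos (norm_pos_iff.mpr hφne) 2
    have hlsk := hls k hk
    -- lower bound on P
    have hP1 : ⟪w k - v k, φ k⟫
        = ‖w k - v k‖ ^ 2 - lam k * ⟪w k - v k, B (w k) - B (v k)⟫ := by
      rw [hφk, inner_sub_right, real_inner_smul_right, real_inner_self_eq_norm_sq]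
    have hCS : ⟪w k - v k, B (w k) - B (v k)⟫ ≤ ‖w k - v k‖ * ‖B (w k) - B (v k)‖ :=
      real_inner_le_norm _ _
    have hPge : (1 - σ) * ‖w k - v k‖ ^ 2 ≤ ⟪w k - v k, φ k⟫ := by
      have h1 := mul_le_mul_of_nonneg_left hCS hlk0.le
      have h2 := mul_le_mul_of_nonneg_left hlsk hN0.le
      nlinarith
    -- upper bound on F
    have hφle : ‖φ k‖ ≤ (1 + σ) * ‖w k - v k‖ := by
      rw [hφk]
      calc ‖w k - v k - lam k • (B (w k) - B (v k))‖
          ≤ ‖w k - v k‖ + ‖lam k • (B (w k) - B (v k))‖ := norm_sub_le _ _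
        _ = ‖w k - v k‖ + lam k * ‖B (w k) - B (v k)‖ := by
            rw [norm_smul, Real.norm_eq_abs, abs_of_pos hlk0]
        _ ≤ ‖w k - v k‖ + σ * ‖w k - v k‖ := by linarith
        _ = (1 + σ) * ‖w k - v k‖ := by ring
    have hFle : ‖φ k‖ ^ 2 ≤ (1 + σ) ^ 2 * ‖w k - v k‖ ^ 2 := by
      calc ‖φ k‖ ^ 2 ≤ ((1 + σ) * ‖w k - v k‖) ^ 2 :=
            pow_le_pow_left₀ (norm_nonneg _) hφle 2
        _ = (1 + σ) ^ 2 * ‖w k - v k‖ ^ 2 := by ring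
    -- φ via the resolvent element
    have hφa : φ k = lam k • (a + B (v k)) := by
      have hla : lam k • a = w k - lam k • B (w k) - v k := by rw [hfbk]; abel
      rw [hφk, smul_add, hla, smul_sub]
      abel
    -- lower bound on Q
    have hQge : lamMin * β * ‖v k - ustar‖ ^ 2 ≤ ⟪v k - ustar, φ k⟫ := by
      have hA := hAsmono (v k) ustar a ha (-B ustar) hstar
      have hB := hBmono (v k) ustar
      have hsum : ⟪a + B (v k), v k - ustar⟫
          = ⟪a - -B ustar, v k - ustar⟫ + ⟪B (v k) - B ustar, v k - ustar⟫ := by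
        rw [← inner_add_left]
        rw [show a - -B ustar + (B (v k) - B ustar) = a + B (v k) from by abel]
      have hinner : β * ‖v k - ustar‖ ^ 2 ≤ ⟪a + B (v k), v k - ustar⟫ := by
        rw [hsum]; linarith
      have hQeq : ⟪v k - ustar, φ k⟫ = lam k * ⟪a + B (v k), v k - ustar⟫ := by
        rw [hφa, real_inner_smul_right, real_inner_comm]
      have h3 := mul_le_mul_of_nonneg_left hinner hlk0.le
      have h4 := mul_le_mul_of_nonneg_right hlk.1
        (mul_nonneg hβ.le (sq_nonneg ‖v k - ustar‖))
      nlinarith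
    -- parallelogram-type bound
    have hWle : ‖w k - ustar‖ ^ 2 ≤ 2 * ‖w k - v k‖ ^ 2 + 2 * ‖v k - ustar‖ ^ 2 := by
      rw [show w k - ustar = (w k - v k) + (v k - ustar) from by abel]
      nlinarith [norm_add_sq_real (w k - v k) (v k - ustar),
        real_inner_le_norm (w k - v k) (v k - ustar),
        sq_nonneg (‖w k - v k‖ - ‖v k - ustar‖)]
    -- expansion of the update
    have hwsplit : ⟪w k - ustar, φ k⟫
        = ⟪w k - v k, φ k⟫ + ⟪v k - ustar, φ k⟫ := by
      rw [show w k - ustar = (w k - v k) + (v k - ustar) from by abel, inner_add_left]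
    have hL : ‖u (k + 1) - ustar‖ ^ 2
        = ‖w k - ustar‖ ^ 2
          - 2 * (γ * (⟪w k - v k, φ k⟫ / ‖φ k‖ ^ 2))
              * (⟪w k - v k, φ k⟫ + ⟪v k - ustar, φ k⟫)
          + (γ * (⟪w k - v k, φ k⟫ / ‖φ k‖ ^ 2)) ^ 2 * ‖φ k‖ ^ 2 := by
      rw [hupd k hk,
        show w k - (γ * (⟪w k - v k, φ k⟫ / ‖φ k‖ ^ 2)) • φ k - ustar
          = (w k - ustar) - (γ * (⟪w k - v k, φ k⟫ / ‖φ k‖ ^ 2)) • φ k from by abel,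
        norm_sub_sq_real, real_inner_smul_right, norm_smul, Real.norm_eq_abs,
        mul_pow, sq_abs, hwsplit]
      ring
    have main := ifb_aux σ γ lamMin β α (min (γ * (2 - γ)) (2 * γ * lamMin * β))
      ‖w k - v k‖ (‖v k - ustar‖ ^ 2) (‖w k - ustar‖ ^ 2)
      (⟪w k - v k, φ k⟫) (⟪v k - ustar, φ k⟫) (‖φ k‖ ^ 2) (‖u (k + 1) - ustar‖ ^ 2)
      hσ0 hσ1 hγ0 hγ2 hlamMin hβ hα hm5 hm6 hm0.le hN0 hF0 (sq_nonneg _)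
      hQge hPge hFle hWle hL
    rw [hτ]
    exact main
end
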